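/- arXiv:2004.02469 — 7 statements merged into one kernel-verified Lean document; each statement's English description precedes it below -/
import Mathlib

section
/- The point p* belongs to the open interval (0,θ), the derivative of the function p ↦ f(p)/g(p) vanishes at p*, and p* is the unique zero of (f/g)' in (0,θ). -/
/-!
Away from the singular points, `f / g` collapses to `K d₂ p (r / u - 1)` with `r = d₁b₂/(d₂b₁)`
and `u = 1 - sₕ p`; since `du/dp = -sₕ` and `sₕ p = 1 - u`, its derivative is
`K d₂ (r - u²) / u²`. On `(0, θ)` one has `u > r > 0`, so the derivative vanishes exactly when
`u = √r`, i.e. at `p = p*`; and `r < √r < 1` places `p*` inside `(0, θ)`.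
-/

open Set

lemma hasDerivAt_mul_div_one_sub_sub (c r a x : ℝ) (hx : 1 - a * x ≠ 0) :
    HasDerivAt (fun p => c * p * (r / (1 - a * p) - 1))
      (c * (r - (1 - a * x) ^ 2) / (1 - a * x) ^ 2) x := by
  have hu : HasDerivAt (fun p => 1 - a * p) (-a) x := by
    simpa using ((hasDerivAt_id x).const_mul a).const_sub 1
  refine (((hasDerivAt_id' x).const_mul c).mul
    (((hasDerivAt_const x r).fun_div hu hx).sub_const 1)).congr_deriv ?_
  field_simp
  ring

lemma mul_sub_sq_div_sq_eq_zero_iff {c r a x : ℝ} (hc : c ≠ 0) (ha : a ≠ 0)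
    (hx : 0 < 1 - a * x) :
    c * (r - (1 - a * x) ^ 2) / (1 - a * x) ^ 2 = 0 ↔ x = (1 / a) * (1 - Real.sqrt r) := by
  rw [div_eq_zero_iff, or_iff_left (pow_ne_zero 2 hx.ne'), mul_eq_zero, or_iff_right hc,
    sub_eq_zero, eq_comm, sq, ← Real.sqrt_eq_iff_mul_self_eq_of_pos hx]
  constructor <;> intro h <;> field_simp at h ⊢ <;> linarith

lemma one_div_mul_one_sub_sqrt_mem_Ioo {r a : ℝ} (ha : 0 < a) (hr0 : 0 < r) (hr1 : r < 1) :
    (1 / a) * (1 - Real.sqrt r) ∈ Ioo 0 ((1 / a) * (1 - r)) := by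
  have hsqrt_lt_one : Real.sqrt r < 1 := (Real.sqrt_lt' one_pos).2 (by simpa using hr1)
  have hlt_sqrt : r < Real.sqrt r := (Real.lt_sqrt hr0.le).2 (by nlinarith)
  have ha' : 0 < 1 / a := one_div_pos.2 ha
  exact ⟨mul_pos ha' (by linarith), mul_lt_mul_of_pos_left (by linarith) ha'⟩

lemma ratio_eq_reduced {b1 b2 d1 d2 K sh y : ℝ} (hb1 : 0 < b1) (hb2 : 0 < b2) (hd2 : d2 ≠ 0)
    (hK : K ≠ 0) (hy0 : 0 < y) (hy1 : y < 1) (hu : 0 < 1 - sh * y) :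
    y * (1 - y) * (d1 * b2 - d2 * b1 * (1 - sh * y)) /
        (b1 * (1 - y) * (1 - sh * y) + b2 * y) /
      ((1 / K) * (b1 * (1 - y) * (1 - sh * y)) / (b1 * (1 - y) * (1 - sh * y) + b2 * y)) =
    K * d2 * y * (d1 * b2 / (d2 * b1) / (1 - sh * y) - 1) := by
  have h1y : 0 < 1 - y := sub_pos.2 hy1
  have hD : b1 * (1 - y) * (1 - sh * y) + b2 * y ≠ 0 := by positivity
  have hu' : 1 - y * sh ≠ 0 := by linarith
  rw [div_div_div_cancel_right₀ hD]
  field_simp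

theorem stmt_3_general
    (b1 b2 d1 d2 K sh : ℝ)
    (hb1 : 0 < b1) (hb2 : 0 < b2) (hd1 : 0 < d1) (hd2 : 0 < d2)
    (hK : 0 < K) (hsh0 : 0 < sh)
    (hlow : 1 - sh < d1 * b2 / (d2 * b1)) (hhigh : d1 * b2 / (d2 * b1) < 1)
    (f g : ℝ → ℝ)
    (hf : ∀ p, f p = p * (1 - p) * (d1 * b2 - d2 * b1 * (1 - sh * p)) /
      (b1 * (1 - p) * (1 - sh * p) + b2 * p))
    (hg : ∀ p, g p = (1 / K) * (b1 * (1 - p) * (1 - sh * p)) /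
      (b1 * (1 - p) * (1 - sh * p) + b2 * p))
    (θ : ℝ) (hθ : θ = (1 / sh) * (1 - d1 * b2 / (d2 * b1)))
    (pstar : ℝ) (hpstar : pstar = (1 / sh) * (1 - Real.sqrt (d1 * b2 / (d2 * b1)))) :
    pstar ∈ Set.Ioo (0 : ℝ) θ ∧
    deriv (fun x => f x / g x) pstar = 0 ∧
    ∀ x ∈ Set.Ioo (0 : ℝ) θ, deriv (fun y => f y / g y) x = 0 → x = pstar := by
  set r := d1 * b2 / (d2 * b1)
  have hr0 : 0 < r := by positivity
  have hshθ : sh * θ = 1 - r := by rw [hθ]; field_simp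
  have hθ1 : θ < 1 := by nlinarith
  have hu : ∀ y ∈ Ioo 0 θ, r < 1 - sh * y := fun y hy => by nlinarith [hy.2]
  have hderiv : ∀ x ∈ Ioo 0 θ, HasDerivAt (fun y => f y / g y)
      (K * d2 * (r - (1 - sh * x) ^ 2) / (1 - sh * x) ^ 2) x := by
    intro x hx
    refine (hasDerivAt_mul_div_one_sub_sub _ r sh x
      (by linarith [hu x hx])).congr_of_eventuallyEq ?_
    filter_upwards [isOpen_Ioo.mem_nhds hx] with y hy
    rw [hf, hg]
    exact ratio_eq_reduced hb1 hb2 hd2.ne' hK.ne' hy.1 (hy.2.trans hθ1) (by linarith [hu y hy])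
  have hzero : ∀ x ∈ Ioo 0 θ, deriv (fun y => f y / g y) x = 0 ↔ x = pstar := fun x hx => by
    rw [(hderiv x hx).deriv, hpstar, mul_sub_sq_div_sq_eq_zero_iff (by positivity) hsh0.ne'
      (by linarith [hu x hx])]
  have hmem : pstar ∈ Ioo 0 θ := by
    rw [hpstar, hθ]
    exact one_div_mul_one_sub_sqrt_mem_Ioo hsh0 hr0 hhigh
  exact ⟨hmem, (hzero pstar hmem).2 rfl, fun x hx => (hzero x hx).1⟩

/-- p* ∈ (0,θ), the derivative of f/g vanishes at p*, and p* is the unique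
zero of (f/g)' in (0,θ). -/
theorem stmt_3
    (b1 b2 d1 d2 K sh : ℝ)
    (hb1 : 0 < b1) (hb2 : 0 < b2) (hd1 : 0 < d1) (hd2 : 0 < d2)
    (hK : 0 < K) (hsh0 : 0 < sh) (hsh1 : sh ≤ 1)
    (hlow : 1 - sh < d1 * b2 / (d2 * b1)) (hhigh : d1 * b2 / (d2 * b1) < 1)
    (f g : ℝ → ℝ)
    (hf : ∀ p, f p = p * (1 - p) * (d1 * b2 - d2 * b1 * (1 - sh * p)) /
      (b1 * (1 - p) * (1 - sh * p) + b2 * p))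
    (hg : ∀ p, g p = (1 / K) * (b1 * (1 - p) * (1 - sh * p)) /
      (b1 * (1 - p) * (1 - sh * p) + b2 * p))
    (θ : ℝ) (hθ : θ = (1 / sh) * (1 - d1 * b2 / (d2 * b1)))
    (pstar : ℝ) (hpstar : pstar = (1 / sh) * (1 - Real.sqrt (d1 * b2 / (d2 * b1)))) :
    pstar ∈ Set.Ioo (0 : ℝ) θ ∧
    deriv (fun x => f x / g x) pstar = 0 ∧
    ∀ x ∈ Set.Ioo (0 : ℝ) θ, deriv (fun y => f y / g y) x = 0 → x = pstar :=
  stmt_3_general b1 b2 d1 d2 K sh hb1 hb2 hd1 hd2 hK hsh0 hlow hhigh f g hf hg θ hθ pstar hpstar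
end

section
/- The function p ↦ -f(p)/g(p) is strictly increasing on (0,p*) and strictly decreasing on (p*,θ); consequently its maximum over [0,θ] is attained at p*, i.e. m* = -f(p*)/g(p*), and m* > 0. -/
/-!
With `q = 1 - sh * p` and `s = √(d1 b2 / (d2 b1))`, the ratio `-f p / g p` equals
`(K d2 / sh) * (q - s²)(1 - q)/q`, and `(q - s²)(1 - q)/q = (1 - s)² - (q - s)²/q`. As a function
of `q > 0` this increases up to `q = s`, where it attains its maximum `(1 - s)² > 0`, and decreases
afterwards. Since `q` decreases in `p`, and `q = s` exactly at `p = p*`, the claims follow.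
-/

open Set

noncomputable def hump (s q : ℝ) : ℝ := (q - s ^ 2) * (1 - q) / q

lemma hump_eq_sq_sub {s q : ℝ} (hq : q ≠ 0) : hump s q = (1 - s) ^ 2 - (q - s) ^ 2 / q := by
  unfold hump; field_simp; ring

lemma hump_le {s q : ℝ} (hq : 0 < q) : hump s q ≤ (1 - s) ^ 2 := by
  rw [hump_eq_sq_sub hq.ne']
  linarith [div_nonneg (sq_nonneg (q - s)) hq.le]

lemma hump_self {s : ℝ} (hs : s ≠ 0) : hump s s = (1 - s) ^ 2 := by
  simp [hump_eq_sq_sub hs]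

lemma hump_sub_hump {s x y : ℝ} (hx : x ≠ 0) (hy : y ≠ 0) :
    hump s x - hump s y = (y - x) * (x * y - s ^ 2) / (x * y) := by
  unfold hump; field_simp; ring

lemma hump_strictMonoOn {s : ℝ} : StrictMonoOn (hump s) (Ioc 0 s) := by
  intro x ⟨hx0, hxs⟩ y ⟨hy0, hys⟩ hxy
  have hxy0 : 0 < x * y := mul_pos hx0 hy0
  have : x * y < s ^ 2 := by nlinarith
  have := hump_sub_hump (s := s) hx0.ne' hy0.ne'
  have : (y - x) * (x * y - s ^ 2) / (x * y) < 0 :=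
    div_neg_of_neg_of_pos (mul_neg_of_pos_of_neg (by linarith) (by linarith)) hxy0
  linarith

lemma hump_strictAntiOn {s : ℝ} (hs : 0 < s) : StrictAntiOn (hump s) (Ici s) := by
  intro x hxs y hys hxy
  have hx0 : 0 < x := hs.trans_le hxs
  have hy0 : 0 < y := hx0.trans hxy
  have hxy0 : 0 < x * y := mul_pos hx0 hy0
  have : s ^ 2 < x * y := by simp only [mem_Ici] at hxs hys; nlinarith
  have := hump_sub_hump (s := s) hx0.ne' hy0.ne'
  have : 0 < (y - x) * (x * y - s ^ 2) / (x * y) :=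
    div_pos (mul_pos (by linarith) (by linarith)) hxy0
  linarith

lemma neg_ratio_eq_mul_hump {b1 b2 d1 d2 K sh s p : ℝ} (hb1 : b1 ≠ 0) (hK : K ≠ 0)
    (hsh : sh ≠ 0) (hp : 1 - p ≠ 0)
    (hD : b1 * (1 - p) * (1 - sh * p) + b2 * p ≠ 0) (hs : d1 * b2 = d2 * b1 * s ^ 2) :
    -(p * (1 - p) * (d1 * b2 - d2 * b1 * (1 - sh * p)) /
        (b1 * (1 - p) * (1 - sh * p) + b2 * p)) /
      ((1 / K) * (b1 * (1 - p) * (1 - sh * p)) / (b1 * (1 - p) * (1 - sh * p) + b2 * p)) =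
      K * d2 / sh * hump s (1 - sh * p) := by
  rw [← neg_div, div_div_div_cancel_right₀ hD, hs, hump]
  field_simp
  ring

lemma strictAnti_one_sub_mul {a : ℝ} (ha : 0 < a) : StrictAnti fun p : ℝ => 1 - a * p :=
  fun _ _ hxy => sub_lt_sub_left (mul_lt_mul_of_pos_left hxy ha) 1

section HumpInP

variable {c s sh pstar : ℝ}

lemma strictMonoOn_mul_hump_one_sub_mul (hc : 0 < c) (hs : 0 < s) (hsh : 0 < sh)
    (hps : sh * pstar = 1 - s) :
    StrictMonoOn (fun p => c * hump s (1 - sh * p)) (Iic pstar) :=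
  (strictMono_mul_left_of_pos hc).comp_strictMonoOn
    ((hump_strictAntiOn hs).comp ((strictAnti_one_sub_mul hsh).strictAntiOn _) fun p hp => by
      simp only [mem_Ici]; nlinarith [mem_Iic.1 hp])

lemma strictAntiOn_mul_hump_one_sub_mul {θ : ℝ} (hc : 0 < c) (hsh : 0 < sh)
    (hps : sh * pstar = 1 - s) (hθ : sh * θ ≤ 1) :
    StrictAntiOn (fun p => c * hump s (1 - sh * p)) (Ico pstar θ) :=
  (strictMono_mul_left_of_pos hc).comp_strictAntiOn
    (hump_strictMonoOn.comp_strictAntiOn ((strictAnti_one_sub_mul hsh).strictAntiOn _)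
      fun p hp => ⟨by nlinarith [hp.2], by nlinarith [hp.1]⟩)

end HumpInP

theorem stmt_4_general
    (b1 b2 d1 d2 K sh : ℝ)
    (hb1 : 0 < b1) (hb2 : 0 < b2) (hd1 : 0 < d1) (hd2 : 0 < d2)
    (hK : 0 < K) (hsh0 : 0 < sh)
    (hlow : 1 - sh < d1 * b2 / (d2 * b1)) (hhigh : d1 * b2 / (d2 * b1) < 1)
    (f g : ℝ → ℝ)
    (hf : ∀ p, f p = p * (1 - p) * (d1 * b2 - d2 * b1 * (1 - sh * p)) /
      (b1 * (1 - p) * (1 - sh * p) + b2 * p))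
    (hg : ∀ p, g p = (1 / K) * (b1 * (1 - p) * (1 - sh * p)) /
      (b1 * (1 - p) * (1 - sh * p) + b2 * p))
    (θ : ℝ) (hθ : θ = (1 / sh) * (1 - d1 * b2 / (d2 * b1)))
    (pstar : ℝ) (hpstar : pstar = (1 / sh) * (1 - Real.sqrt (d1 * b2 / (d2 * b1))))
    (mstar : ℝ)
    (hmstar : IsGreatest ((fun p => -f p / g p) '' Set.Icc 0 θ) mstar) :
    StrictMonoOn (fun p => -f p / g p) (Set.Ioo 0 pstar) ∧
    StrictAntiOn (fun p => -f p / g p) (Set.Ioo pstar θ) ∧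
    mstar = -f pstar / g pstar ∧ 0 < mstar := by
  set s := Real.sqrt (d1 * b2 / (d2 * b1))
  have hr0 : 0 < d1 * b2 / (d2 * b1) := by positivity
  have hs0 : 0 < s := Real.sqrt_pos.mpr hr0
  have hss : s ^ 2 = d1 * b2 / (d2 * b1) := Real.sq_sqrt hr0.le
  have hs1 : s < 1 := by nlinarith
  have hA : d1 * b2 = d2 * b1 * s ^ 2 := by rw [hss]; field_simp
  have hθs : sh * θ = 1 - s ^ 2 := by rw [hθ, hss]; field_simp
  have hps : sh * pstar = 1 - s := by rw [hpstar]; field_simp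
  have hθ1 : θ < 1 := by nlinarith
  have hq : ∀ p ∈ Icc 0 θ, 0 < 1 - sh * p := fun p hp => by nlinarith [hp.2]
  set c := K * d2 / sh
  have hc : 0 < c := by positivity
  have heq : EqOn (fun p => -f p / g p) (fun p => c * hump s (1 - sh * p)) (Icc 0 θ) := by
    intro p hp
    have hp1 : 0 < 1 - p := by linarith [hp.2]
    have hD : 0 < b1 * (1 - p) * (1 - sh * p) + b2 * p :=
      add_pos_of_pos_of_nonneg (mul_pos (mul_pos hb1 hp1) (hq p hp)) (mul_nonneg hb2.le hp.1)
    simp only [hf, hg]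
    exact neg_ratio_eq_mul_hump hb1.ne' hK.ne' hsh0.ne' hp1.ne' hD.ne' hA
  have hpI : pstar ∈ Icc 0 θ := ⟨by nlinarith, by nlinarith⟩
  refine ⟨?_, ?_, ?_⟩
  · exact ((strictMonoOn_mul_hump_one_sub_mul hc hs0 hsh0 hps).mono fun _ hp => hp.2.le).congr
      fun p hp => (heq ⟨hp.1.le, hp.2.le.trans hpI.2⟩).symm
  · exact ((strictAntiOn_mul_hump_one_sub_mul hc hsh0 hps (by nlinarith)).mono
      Ioo_subset_Ico_self).congr fun p hp => (heq ⟨hpI.1.trans hp.1.le, hp.2.le⟩).symm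
  have hval : -f pstar / g pstar = c * (1 - s) ^ 2 := by
    refine (heq hpI).trans ?_
    beta_reduce
    rw [show 1 - sh * pstar = s by linarith, hump_self hs0.ne']
  have hmax : IsGreatest ((fun p => -f p / g p) '' Icc 0 θ) (-f pstar / g pstar) :=
    ⟨mem_image_of_mem _ hpI, forall_mem_image.2 fun p hp => by
      rw [hval]
      exact (heq hp).trans_le (mul_le_mul_of_nonneg_left (hump_le (hq p hp)) hc.le)⟩
  obtain rfl := hmstar.unique hmax
  exact ⟨rfl, hval ▸ mul_pos hc (pow_pos (sub_pos.2 hs1) 2)⟩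

/-- p ↦ -f(p)/g(p) is strictly increasing on (0,p*) and strictly decreasing
on (p*,θ); its maximum m* over [0,θ] is attained at p*, i.e. m* = -f(p*)/g(p*), and m* > 0. -/
theorem stmt_4
    (b1 b2 d1 d2 K sh : ℝ)
    (hb1 : 0 < b1) (hb2 : 0 < b2) (hd1 : 0 < d1) (hd2 : 0 < d2)
    (hK : 0 < K) (hsh0 : 0 < sh) (hsh1 : sh ≤ 1)
    (hlow : 1 - sh < d1 * b2 / (d2 * b1)) (hhigh : d1 * b2 / (d2 * b1) < 1)
    (f g : ℝ → ℝ)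
    (hf : ∀ p, f p = p * (1 - p) * (d1 * b2 - d2 * b1 * (1 - sh * p)) /
      (b1 * (1 - p) * (1 - sh * p) + b2 * p))
    (hg : ∀ p, g p = (1 / K) * (b1 * (1 - p) * (1 - sh * p)) /
      (b1 * (1 - p) * (1 - sh * p) + b2 * p))
    (θ : ℝ) (hθ : θ = (1 / sh) * (1 - d1 * b2 / (d2 * b1)))
    (pstar : ℝ) (hpstar : pstar = (1 / sh) * (1 - Real.sqrt (d1 * b2 / (d2 * b1))))
    (mstar : ℝ)
    (hmstar : IsGreatest ((fun p => -f p / g p) '' Set.Icc 0 θ) mstar) :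
    StrictMonoOn (fun p => -f p / g p) (Set.Ioo 0 pstar) ∧
    StrictAntiOn (fun p => -f p / g p) (Set.Ioo pstar θ) ∧
    mstar = -f pstar / g pstar ∧ 0 < mstar :=
  stmt_4_general b1 b2 d1 d2 K sh hb1 hb2 hd1 hd2 hK hsh0 hlow hhigh f g hf hg θ hθ pstar hpstar
    mstar hmstar
end

section
/- If M > m*, then the integral T* = ∫₀^θ dν/(f(ν) + M·g(ν)) is finite and strictly positive. -/
/-!
On `[0, θ]` we have `θ < 1` (from `1 - sₕ < d₁b₂/(d₂b₁)`) and `sₕ ≤ 1`, so `1 - p` and `1 - sₕp`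
are positive there; hence the common denominator of `f` and `g` and the function `g` itself are
positive, and `f + M g` is continuous. Since `-f/g ≤ m* < M` on `[0, θ]`, `f + M g > 0` there, so
its reciprocal is a continuous positive function on an interval of positive length `θ`.
-/

open Set

lemma one_sub_mul_pos {s p : ℝ} (hs : s ≤ 1) (hp0 : 0 ≤ p) (hp1 : p < 1) : 0 < 1 - s * p := by
  nlinarith

lemma mul_one_sub_mul_one_sub_mul_add_mul_pos {b1 b2 s p : ℝ} (hb1 : 0 < b1) (hb2 : 0 < b2)
    (hs : s ≤ 1) (hp0 : 0 ≤ p) (hp1 : p < 1) :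
    0 < b1 * (1 - p) * (1 - s * p) + b2 * p := by
  have : 0 < b1 * (1 - p) * (1 - s * p) := by
    have := one_sub_mul_pos hs hp0 hp1
    have : 0 < 1 - p := by linarith
    positivity
  positivity

lemma add_mul_pos_of_upperBound_neg_div {f g : ℝ → ℝ} {s : Set ℝ} {m M : ℝ}
    (hg : ∀ p ∈ s, 0 < g p) (hm : m ∈ upperBounds ((fun p => -f p / g p) '' s)) (hM : m < M) :
    ∀ p ∈ s, 0 < f p + M * g p := by
  intro p hp
  have : -f p / g p < M := (hm ⟨p, hp, rfl⟩).trans_lt hM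
  linarith [(div_lt_iff₀ (hg p hp)).mp this]

lemma intervalIntegrable_inv_and_integral_inv_pos {F : ℝ → ℝ} {a b : ℝ} (hab : a < b)
    (hF : ContinuousOn F (Icc a b)) (hpos : ∀ x ∈ Icc a b, 0 < F x) :
    IntervalIntegrable (fun x => (F x)⁻¹) MeasureTheory.volume a b ∧
      0 < ∫ x in a..b, (F x)⁻¹ := by
  have hII : IntervalIntegrable (fun x => (F x)⁻¹) MeasureTheory.volume a b :=
    (hF.inv₀ fun x hx => (hpos x hx).ne').intervalIntegrable_of_Icc hab.le
  exact ⟨hII, intervalIntegral.intervalIntegral_pos_of_pos_on hII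
    (fun x hx => inv_pos.mpr (hpos x (Ioo_subset_Icc_self hx))) hab⟩

theorem stmt_6_general
    (b1 b2 d1 d2 K sh : ℝ)
    (hb1 : 0 < b1) (hb2 : 0 < b2)
    (hK : 0 < K) (hsh0 : 0 < sh) (hsh1 : sh ≤ 1)
    (hlow : 1 - sh < d1 * b2 / (d2 * b1)) (hhigh : d1 * b2 / (d2 * b1) < 1)
    (f g : ℝ → ℝ)
    (hf : ∀ p, f p = p * (1 - p) * (d1 * b2 - d2 * b1 * (1 - sh * p)) /
      (b1 * (1 - p) * (1 - sh * p) + b2 * p))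
    (hg : ∀ p, g p = (1 / K) * (b1 * (1 - p) * (1 - sh * p)) /
      (b1 * (1 - p) * (1 - sh * p) + b2 * p))
    (θ : ℝ) (hθ : θ = (1 / sh) * (1 - d1 * b2 / (d2 * b1)))
    (mstar : ℝ)
    (hmstar : IsGreatest ((fun p => -f p / g p) '' Set.Icc 0 θ) mstar)
    (M : ℝ) (hM : mstar < M) :
    IntervalIntegrable (fun ν => (f ν + M * g ν)⁻¹) MeasureTheory.volume 0 θ ∧
    0 < ∫ ν in (0:ℝ)..θ, (f ν + M * g ν)⁻¹ := by
  have hθ_pos : 0 < θ := by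
    rw [hθ]
    exact mul_pos (by positivity) (by linarith)
  have hθ_lt_one : θ < 1 := by
    rw [hθ, one_div_mul_eq_div, div_lt_one hsh0]
    linarith
  have hp_lt_one : ∀ p ∈ Icc 0 θ, p < 1 := fun p hp => hp.2.trans_lt hθ_lt_one
  have hD : ∀ p ∈ Icc 0 θ, 0 < b1 * (1 - p) * (1 - sh * p) + b2 * p := fun p hp =>
    mul_one_sub_mul_one_sub_mul_add_mul_pos hb1 hb2 hsh1 hp.1 (hp_lt_one p hp)
  have hg_pos : ∀ p ∈ Icc 0 θ, 0 < g p := by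
    intro p hp
    have := one_sub_mul_pos hsh1 hp.1 (hp_lt_one p hp)
    have : 0 < 1 - p := by linarith [hp_lt_one p hp]
    rw [hg]
    exact div_pos (by positivity) (hD p hp)
  have hcont : ContinuousOn (fun ν => f ν + M * g ν) (Icc 0 θ) := by
    simp only [hf, hg]
    fun_prop (disch := exact fun p hp => (hD p hp).ne')
  exact intervalIntegrable_inv_and_integral_inv_pos hθ_pos hcont
    (add_mul_pos_of_upperBound_neg_div hg_pos hmstar.2 hM)

/-- if M > m*, the integral T* = ∫₀^θ dν/(f(ν)+M g(ν)) is finite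
(the integrand is interval integrable) and strictly positive. -/
theorem stmt_6
    (b1 b2 d1 d2 K sh : ℝ)
    (hb1 : 0 < b1) (hb2 : 0 < b2) (hd1 : 0 < d1) (hd2 : 0 < d2)
    (hK : 0 < K) (hsh0 : 0 < sh) (hsh1 : sh ≤ 1)
    (hlow : 1 - sh < d1 * b2 / (d2 * b1)) (hhigh : d1 * b2 / (d2 * b1) < 1)
    (f g : ℝ → ℝ)
    (hf : ∀ p, f p = p * (1 - p) * (d1 * b2 - d2 * b1 * (1 - sh * p)) /
      (b1 * (1 - p) * (1 - sh * p) + b2 * p))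
    (hg : ∀ p, g p = (1 / K) * (b1 * (1 - p) * (1 - sh * p)) /
      (b1 * (1 - p) * (1 - sh * p) + b2 * p))
    (θ : ℝ) (hθ : θ = (1 / sh) * (1 - d1 * b2 / (d2 * b1)))
    (mstar : ℝ)
    (hmstar : IsGreatest ((fun p => -f p / g p) '' Set.Icc 0 θ) mstar)
    (M : ℝ) (hM : mstar < M) :
    IntervalIntegrable (fun ν => (f ν + M * g ν)⁻¹) MeasureTheory.volume 0 θ ∧
    0 < ∫ ν in (0:ℝ)..θ, (f ν + M * g ν)⁻¹ :=
  stmt_6_general b1 b2 d1 d2 K sh hb1 hb2 hK hsh0 hsh1 hlow hhigh f g hf hg θ hθ mstar hmstar M hM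
end

section
/- For any constant ū > m*, the solution p of the ODE p'(t) = f(p(t)) + ū·g(p(t)) with p(0) = 0 is strictly increasing as long as p(t) ≤ θ, and it reaches the value θ exactly at time T_ū = ∫₀^θ dν/(f(ν) + ū·g(ν)), i.e. p(T_ū) = θ. -/
/-!
Write `F = f + ū g`. On `[0, 1)` the field `F` is positive: on `[0, θ]` because `ū > m*`, and on
`(θ, 1)` because there `g > 0` and `f > 0`, the sign of `f` being that of
`d₁b₂ - d₂b₁(1 - s_h p) = d₂b₁s_h (p - θ)`, while `ū > m* ≥ -f(θ)/g(θ) = 0`.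

A solution of an autonomous scalar equation never crosses downwards a level at which the field
is positive. Hence, as long as `p` stays below some `b ∈ (θ, 1)`, it stays in `[0, b]`, where
`p' = F(p) > 0`. Since `p' ≥ min_{[0, θ]} F > 0` until `p` reaches `θ`, it does reach `θ`, at a
time `v`, and the substitution `ν = p(t)` in `v = ∫₀^v p'(t) / F(p(t)) dt` gives `v = T_ū`.
-/

open Set

theorem add_mul_pos_of_mem_upperBounds {f g : ℝ → ℝ} {θ m u : ℝ} (hθ : 0 ≤ θ)
    (hm : m ∈ upperBounds ((fun x => -f x / g x) '' Icc 0 θ)) (hmu : m < u)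
    (hfθ : f θ = 0) (hf : ∀ x ∈ Ioo θ 1, 0 < f x) (hg : ∀ x ∈ Ico 0 1, 0 < g x) :
    ∀ x ∈ Ico 0 1, 0 < f x + u * g x := by
  intro x hx
  rcases le_or_gt x θ with hxθ | hθx
  · have hlt : -f x / g x < u := (hm ⟨x, ⟨hx.1, hxθ⟩, rfl⟩).trans_lt hmu
    linarith [(div_lt_iff₀ (hg x hx)).1 hlt]
  · have hu : 0 < u := by
      simpa [hfθ] using (hm ⟨θ, ⟨hθ, le_rfl⟩, rfl⟩).trans_lt hmu
    nlinarith [hf x ⟨hθx, hx.2⟩, hg x hx]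

namespace Model

variable {b1 b2 d1 d2 K sh θ : ℝ}

theorem theta_pos (hsh : 0 < sh) (hθ : θ = (1 / sh) * (1 - d1 * b2 / (d2 * b1)))
    (hhigh : d1 * b2 / (d2 * b1) < 1) : 0 < θ := by
  rw [hθ]
  exact mul_pos (one_div_pos.2 hsh) (sub_pos.2 hhigh)

theorem theta_lt_one (hsh : 0 < sh) (hθ : θ = (1 / sh) * (1 - d1 * b2 / (d2 * b1)))
    (hlow : 1 - sh < d1 * b2 / (d2 * b1)) : θ < 1 := by
  rw [hθ, one_div_mul_eq_div, div_lt_one hsh]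
  linarith

theorem sub_mul_eq_mul_sub_theta (hd2 : d2 ≠ 0) (hb1 : b1 ≠ 0) (hsh : sh ≠ 0)
    (hθ : θ = (1 / sh) * (1 - d1 * b2 / (d2 * b1))) (x : ℝ) :
    d1 * b2 - d2 * b1 * (1 - sh * x) = d2 * b1 * sh * (x - θ) := by
  subst hθ
  field_simp
  ring

theorem denom_pos (hb1 : 0 < b1) (hb2 : 0 ≤ b2) (hsh1 : sh ≤ 1) {x : ℝ} (hx : x ∈ Ico 0 1) :
    0 < b1 * (1 - x) * (1 - sh * x) + b2 * x := by
  have h1 : 0 < 1 - x := sub_pos.2 hx.2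
  have h2 : 0 < 1 - sh * x := by nlinarith [hx.1, hx.2]
  have := mul_nonneg hb2 hx.1
  positivity

theorem g_pos {g : ℝ → ℝ} (hK : 0 < K) (hb1 : 0 < b1) (hb2 : 0 ≤ b2) (hsh1 : sh ≤ 1)
    (hg : ∀ x, g x = (1 / K) * (b1 * (1 - x) * (1 - sh * x)) /
      (b1 * (1 - x) * (1 - sh * x) + b2 * x)) :
    ∀ x ∈ Ico 0 1, 0 < g x := by
  intro x hx
  have h1 : 0 < 1 - x := sub_pos.2 hx.2
  have h2 : 0 < 1 - sh * x := by nlinarith [hx.1, hx.2]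
  rw [hg]
  exact div_pos (by positivity) (denom_pos hb1 hb2 hsh1 hx)

theorem f_theta_eq_zero {f : ℝ → ℝ} (hd2 : d2 ≠ 0) (hb1 : b1 ≠ 0) (hsh : sh ≠ 0)
    (hθ : θ = (1 / sh) * (1 - d1 * b2 / (d2 * b1)))
    (hf : ∀ x, f x = x * (1 - x) * (d1 * b2 - d2 * b1 * (1 - sh * x)) /
      (b1 * (1 - x) * (1 - sh * x) + b2 * x)) : f θ = 0 := by
  rw [hf, sub_mul_eq_mul_sub_theta hd2 hb1 hsh hθ, sub_self]
  simp

theorem f_pos_of_theta_lt {f : ℝ → ℝ} (hd2 : 0 < d2) (hb1 : 0 < b1) (hb2 : 0 ≤ b2)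
    (hsh : 0 < sh) (hsh1 : sh ≤ 1) (hθ : θ = (1 / sh) * (1 - d1 * b2 / (d2 * b1)))
    (hθ0 : 0 ≤ θ)
    (hf : ∀ x, f x = x * (1 - x) * (d1 * b2 - d2 * b1 * (1 - sh * x)) /
      (b1 * (1 - x) * (1 - sh * x) + b2 * x)) :
    ∀ x ∈ Ioo θ 1, 0 < f x := by
  intro x hx
  have hx0 : 0 < x := hθ0.trans_lt hx.1
  have h1 : 0 < 1 - x := sub_pos.2 hx.2
  have h2 : 0 < x - θ := sub_pos.2 hx.1
  rw [hf, sub_mul_eq_mul_sub_theta hd2.ne' hb1.ne' hsh.ne' hθ]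
  exact div_pos (by positivity) (denom_pos hb1 hb2 hsh1 ⟨hx0.le, hx.2⟩)

theorem continuousOn_add_mul {f g : ℝ → ℝ} (hb1 : 0 < b1) (hb2 : 0 ≤ b2) (hsh1 : sh ≤ 1)
    (hf : ∀ x, f x = x * (1 - x) * (d1 * b2 - d2 * b1 * (1 - sh * x)) /
      (b1 * (1 - x) * (1 - sh * x) + b2 * x))
    (hg : ∀ x, g x = (1 / K) * (b1 * (1 - x) * (1 - sh * x)) /
      (b1 * (1 - x) * (1 - sh * x) + b2 * x)) (u : ℝ) :
    ContinuousOn (fun x => f x + u * g x) (Ico 0 1) := by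
  have hD : ∀ x ∈ Ico (0 : ℝ) 1, b1 * (1 - x) * (1 - sh * x) + b2 * x ≠ 0 :=
    fun x hx => (denom_pos hb1 hb2 hsh1 hx).ne'
  simp only [hf, hg]
  fun_prop (disch := exact hD)

end Model

section AutonomousODE

variable {F p : ℝ → ℝ} {b : ℝ}

theorem le_of_hasDerivAt_comp_of_pos (hode : ∀ t, 0 ≤ t → HasDerivAt p (F (p t)) t)
    {c s t : ℝ} (hc : 0 < F c) (hs : 0 ≤ s) (hst : s ≤ t) (hps : c ≤ p s) : c ≤ p t := by
  have hderiv : ∀ x ∈ Ico s t, HasDerivWithinAt (-p) (-F (p x)) (Ici x) x :=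
    fun x hx => (hode x (hs.trans hx.1)).neg.hasDerivWithinAt
  have hcont : ContinuousOn (-p) (Icc s t) :=
    fun x hx => (hode x (hs.trans hx.1)).continuousAt.neg.continuousWithinAt
  have := image_le_of_deriv_right_lt_deriv_boundary hcont hderiv (B := fun _ => -c) (B' := 0)
    (neg_le_neg hps) (fun _ => hasDerivAt_const _ _)
    (fun x _ hx => by simp_all [neg_inj.1 hx]) ⟨hst, le_rfl⟩
  simpa using this

theorem mapsTo_Icc_of_hasDerivAt_comp (hF : ∀ x ∈ Icc (p 0) b, 0 < F x) (hb : p 0 ≤ b)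
    (hode : ∀ t, 0 ≤ t → HasDerivAt p (F (p t)) t) {t : ℝ} (hpt : p t < b) :
    MapsTo p (Icc 0 t) (Icc (p 0) b) := by
  intro u ⟨hu, hut⟩
  refine ⟨le_of_hasDerivAt_comp_of_pos hode (hF _ ⟨le_rfl, hb⟩) le_rfl hu le_rfl, ?_⟩
  by_contra! hbu
  exact hpt.not_ge (le_of_hasDerivAt_comp_of_pos hode (hF b ⟨hb, le_rfl⟩) hu hut hbu.le)

theorem strictMonoOn_of_hasDerivAt_comp (hF : ∀ x ∈ Icc (p 0) b, 0 < F x) (hb : p 0 ≤ b)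
    (hode : ∀ t, 0 ≤ t → HasDerivAt p (F (p t)) t) {t : ℝ} (hpt : p t < b) :
    StrictMonoOn p (Icc 0 t) := by
  refine strictMonoOn_of_deriv_pos (convex_Icc 0 t)
    (fun u hu => (hode u hu.1).continuousAt.continuousWithinAt) fun u hu => ?_
  rw [interior_Icc] at hu
  rw [(hode u hu.1.le).deriv]
  exact hF _ (mapsTo_Icc_of_hasDerivAt_comp hF hb hode hpt (Ioo_subset_Icc_self hu))

theorem eq_integral_inv_of_hasDerivAt_comp (hF : ∀ x ∈ Icc (p 0) b, 0 < F x) (hb : p 0 ≤ b)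
    (hode : ∀ t, 0 ≤ t → HasDerivAt p (F (p t)) t) {t : ℝ} (ht : 0 ≤ t) (hpt : p t < b) :
    t = ∫ x in p 0..p t, (F x)⁻¹ := by
  have hmaps := mapsTo_Icc_of_hasDerivAt_comp hF hb hode hpt
  have hIoo : Ioo (min 0 t) (max 0 t) = Ioo 0 t := by rw [min_eq_left ht, max_eq_right ht]
  rw [← intervalIntegral.integral_comp_mul_deriv_of_deriv_nonneg (f' := F ∘ p)
    (fun u hu => (hode u (by rw [uIcc_of_le ht] at hu; exact hu.1)).continuousAt.continuousWithinAt)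
    (fun u hu => hode u (by rw [hIoo] at hu; exact hu.1.le))
    (fun u hu => (hF _ (hmaps (by rw [hIoo] at hu; exact Ioo_subset_Icc_self hu))).le)]
  have hone : EqOn (fun u => ((fun x => (F x)⁻¹) ∘ p) u * (F ∘ p) u) 1 (uIcc 0 t) := by
    intro u hu
    rw [uIcc_of_le ht] at hu
    exact inv_mul_cancel₀ (hF _ (hmaps hu)).ne'
  rw [intervalIntegral.integral_congr hone]
  simp

theorem exists_eq_of_hasDerivAt_comp (hF : ∀ x ∈ Icc (p 0) b, 0 < F x)
    (hFc : ContinuousOn F (Icc (p 0) b)) (hode : ∀ t, 0 ≤ t → HasDerivAt p (F (p t)) t)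
    {θ : ℝ} (hθ : p 0 ≤ θ) (hθb : θ < b) : ∃ t, 0 ≤ t ∧ p t = θ := by
  have hFθ : ∀ x ∈ Icc (p 0) θ, 0 < F x := fun x hx => hF x ⟨hx.1, hx.2.trans hθb.le⟩
  obtain ⟨x₀, hx₀, hmin⟩ := isCompact_Icc.exists_isMinOn (nonempty_Icc.2 hθ)
    (hFc.mono (Icc_subset_Icc_right hθb.le))
  have hpc : ContinuousOn p (Ici 0) := fun u hu => (hode u hu).continuousAt.continuousWithinAt
  obtain ⟨u, hu, hθu⟩ : ∃ u, 0 ≤ u ∧ θ ≤ p u := by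
    by_contra! hlt
    have hgrowth := (convex_Ici (0 : ℝ)).mul_sub_le_image_sub_of_le_deriv hpc
      (fun u hu => (hode u (interior_subset hu)).differentiableAt.differentiableWithinAt)
      (C := F x₀) (fun u hu => by
        have hu : 0 ≤ u := interior_subset hu
        rw [(hode u hu).deriv]
        exact hmin (mapsTo_Icc_of_hasDerivAt_comp hFθ hθ hode (hlt u hu) ⟨hu, le_rfl⟩))
    have hT : 0 ≤ (θ - p 0) / F x₀ := div_nonneg (sub_nonneg.2 hθ) (hFθ x₀ hx₀).le
    have := hgrowth 0 self_mem_Ici _ hT hT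
    rw [sub_zero, mul_div_cancel₀ _ (hFθ x₀ hx₀).ne'] at this
    linarith [hlt _ hT]
  obtain ⟨t, ht, hpt⟩ := intermediate_value_Icc hu (hpc.mono Icc_subset_Ici_self) ⟨hθ, hθu⟩
  exact ⟨t, ht.1, hpt⟩

theorem apply_integral_inv_of_hasDerivAt_comp (hF : ∀ x ∈ Icc (p 0) b, 0 < F x)
    (hFc : ContinuousOn F (Icc (p 0) b)) (hode : ∀ t, 0 ≤ t → HasDerivAt p (F (p t)) t)
    {θ : ℝ} (hθ : p 0 ≤ θ) (hθb : θ < b) : p (∫ x in p 0..θ, (F x)⁻¹) = θ := by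
  obtain ⟨t, ht, rfl⟩ := exists_eq_of_hasDerivAt_comp hF hFc hode hθ hθb
  rw [← eq_integral_inv_of_hasDerivAt_comp hF (hθ.trans hθb.le) hode ht hθb]

end AutonomousODE

theorem stmt_7_general
    (b1 b2 d1 d2 K sh : ℝ)
    (hb1 : 0 < b1) (hb2 : 0 < b2) (hd2 : 0 < d2)
    (hK : 0 < K) (hsh0 : 0 < sh) (hsh1 : sh ≤ 1)
    (hlow : 1 - sh < d1 * b2 / (d2 * b1)) (hhigh : d1 * b2 / (d2 * b1) < 1)
    (f g : ℝ → ℝ)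
    (hf : ∀ p, f p = p * (1 - p) * (d1 * b2 - d2 * b1 * (1 - sh * p)) /
      (b1 * (1 - p) * (1 - sh * p) + b2 * p))
    (hg : ∀ p, g p = (1 / K) * (b1 * (1 - p) * (1 - sh * p)) /
      (b1 * (1 - p) * (1 - sh * p) + b2 * p))
    (θ : ℝ) (hθ : θ = (1 / sh) * (1 - d1 * b2 / (d2 * b1)))
    (mstar : ℝ)
    (hmstar : IsGreatest ((fun p => -f p / g p) '' Set.Icc 0 θ) mstar)
    (ubar : ℝ) (hubar : mstar < ubar)
    (Tubar : ℝ) (hTubar : Tubar = ∫ ν in (0:ℝ)..θ, (f ν + ubar * g ν)⁻¹)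
    (p : ℝ → ℝ) (hp0 : p 0 = 0)
    (hode : ∀ t : ℝ, 0 ≤ t → HasDerivAt p (f (p t) + ubar * g (p t)) t) :
    (∀ s t : ℝ, 0 ≤ s → s < t → p t ≤ θ → p s < p t) ∧ p Tubar = θ := by
  have hθ0 : 0 < θ := Model.theta_pos hsh0 hθ hhigh
  obtain ⟨b, hθb, hb_lt_one⟩ := exists_between (Model.theta_lt_one hsh0 hθ hlow)
  have hsub : Icc (p 0) b ⊆ Ico 0 1 := by rw [hp0]; exact Icc_subset_Ico_right hb_lt_one
  have hF : ∀ x ∈ Icc (p 0) b, 0 < f x + ubar * g x := fun x hx =>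
    add_mul_pos_of_mem_upperBounds hθ0.le hmstar.2 hubar
      (Model.f_theta_eq_zero hd2.ne' hb1.ne' hsh0.ne' hθ hf)
      (Model.f_pos_of_theta_lt hd2 hb1 hb2.le hsh0 hsh1 hθ hθ0.le hf)
      (Model.g_pos hK hb1 hb2.le hsh1 hg) x (hsub hx)
  have hFc := (Model.continuousOn_add_mul hb1 hb2.le hsh1 hf hg ubar).mono hsub
  have hpθ : p 0 ≤ θ := hp0.symm ▸ hθ0.le
  refine ⟨fun s t hs hst hpt => ?_, ?_⟩
  · exact strictMonoOn_of_hasDerivAt_comp hF (hpθ.trans hθb.le) hode (hpt.trans_lt hθb)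
      ⟨hs, hst.le⟩ ⟨hs.trans hst.le, le_rfl⟩ hst
  · simpa only [hTubar, hp0] using apply_integral_inv_of_hasDerivAt_comp hF hFc hode hpθ hθb

/-- for a constant control ū > m*, the solution of p' = f(p) + ū g(p), p(0)=0,
is strictly increasing as long as p(t) ≤ θ and reaches θ exactly at time
T_ū = ∫₀^θ dν/(f(ν)+ū g(ν)). -/
theorem stmt_7
    (b1 b2 d1 d2 K sh : ℝ)
    (hb1 : 0 < b1) (hb2 : 0 < b2) (hd1 : 0 < d1) (hd2 : 0 < d2)
    (hK : 0 < K) (hsh0 : 0 < sh) (hsh1 : sh ≤ 1)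
    (hlow : 1 - sh < d1 * b2 / (d2 * b1)) (hhigh : d1 * b2 / (d2 * b1) < 1)
    (f g : ℝ → ℝ)
    (hf : ∀ p, f p = p * (1 - p) * (d1 * b2 - d2 * b1 * (1 - sh * p)) /
      (b1 * (1 - p) * (1 - sh * p) + b2 * p))
    (hg : ∀ p, g p = (1 / K) * (b1 * (1 - p) * (1 - sh * p)) /
      (b1 * (1 - p) * (1 - sh * p) + b2 * p))
    (θ : ℝ) (hθ : θ = (1 / sh) * (1 - d1 * b2 / (d2 * b1)))
    (mstar : ℝ)
    (hmstar : IsGreatest ((fun p => -f p / g p) '' Set.Icc 0 θ) mstar)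
    (ubar : ℝ) (hubar : mstar < ubar)
    (Tubar : ℝ) (hTubar : Tubar = ∫ ν in (0:ℝ)..θ, (f ν + ubar * g ν)⁻¹)
    (p : ℝ → ℝ) (hp0 : p 0 = 0)
    (hode : ∀ t : ℝ, 0 ≤ t → HasDerivAt p (f (p t) + ubar * g (p t)) t) :
    (∀ s t : ℝ, 0 ≤ s → s < t → p t ≤ θ → p s < p t) ∧ p Tubar = θ :=
  stmt_7_general b1 b2 d1 d2 K sh hb1 hb2 hd2 hK hsh0 hsh1 hlow hhigh f g hf hg θ hθ mstar hmstar
    ubar hubar Tubar hTubar p hp0 hode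
end

section
/- Fix T > 0 and M > m*. There exists a constant control ū ∈ (m*, M] such that the solution p of p'(t) = f(p(t)) + ū·g(p(t)) with p(0) = 0 satisfies p(T) ≥ θ if and only if T ≥ T*, where T* = ∫₀^θ dν/(f(ν) + M·g(ν)). -/
/-!
Write `H = f + M g`. It is positive on `[0, 1)`: on `[0, θ]` because `M > m*`, beyond `θ` because
`f` and `g` are. Hence `Φ x = ∫₀ˣ dν / H ν` is the time the constant control `M` needs to move `p`
from `0` to `x`, and `T* = Φ θ`.

If `ū ≤ M`, the speed `f + ū g` is at most `H` on `[0, θ]`, so while `p` crosses `[0, θ]` the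
function `Φ (p t) - t` cannot increase, which forces `T ≥ T*`. Conversely, the inverse of `Φ`
solves `p' = H p`, `p 0 = 0`; it lives for all times because `H` vanishes only linearly at the
equilibrium `1`, so `Φ` is unbounded there. Being monotone, it reaches `θ` by time `T` exactly
when `T ≥ Φ θ`.
-/

open Set Filter Topology

section Primitive

variable {φ : ℝ → ℝ} {a b x₀ : ℝ}

theorem intervalIntegrable_of_continuousOn_Icc (hφ : ContinuousOn φ (Icc a b))
    (hx₀ : x₀ ∈ Icc a b) {x : ℝ} (hx : x ∈ Icc a b) :
    IntervalIntegrable φ MeasureTheory.volume x₀ x :=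
  (hφ.mono (uIcc_subset_Icc hx₀ hx)).intervalIntegrable

theorem continuousOn_integral_of_continuousOn_Icc (hφ : ContinuousOn φ (Icc a b))
    (hx₀ : x₀ ∈ Icc a b) : ContinuousOn (fun x => ∫ y in x₀..x, φ y) (Icc a b) := by
  have hab : a ≤ b := hx₀.1.trans hx₀.2
  rw [← uIcc_of_le hab] at hφ hx₀ ⊢
  exact intervalIntegral.continuousOn_primitive_interval' hφ.intervalIntegrable hx₀

theorem hasDerivAt_integral_of_continuousOn_Icc (hφ : ContinuousOn φ (Icc a b))
    (hx₀ : x₀ ∈ Icc a b) {x : ℝ} (hx : x ∈ Ioo a b) :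
    HasDerivAt (fun x => ∫ y in x₀..x, φ y) (φ x) x :=
  intervalIntegral.integral_hasDerivAt_right
    (intervalIntegrable_of_continuousOn_Icc hφ hx₀ (Ioo_subset_Icc_self hx))
    ((hφ.mono Ioo_subset_Icc_self).stronglyMeasurableAtFilter isOpen_Ioo x hx)
    (hφ.continuousAt (Icc_mem_nhds hx.1 hx.2))

theorem strictMonoOn_integral_of_pos (hφ : ContinuousOn φ (Icc a b)) (hx₀ : x₀ ∈ Icc a b)
    (hpos : ∀ x ∈ Ioo a b, 0 < φ x) : StrictMonoOn (fun x => ∫ y in x₀..x, φ y) (Icc a b) :=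
  strictMonoOn_of_deriv_pos (convex_Icc a b) (continuousOn_integral_of_continuousOn_Icc hφ hx₀)
    fun x hx => by
      rw [interior_Icc] at hx
      rw [(hasDerivAt_integral_of_continuousOn_Icc hφ hx₀ hx).deriv]
      exact hpos x hx

end Primitive

theorem exists_eq_forall_lt_of_continuousOn {p : ℝ → ℝ} {a b β : ℝ} (hab : a ≤ b)
    (hp : ContinuousOn p (Icc a b)) (ha : p a ≤ β) (hb : β ≤ p b) :
    ∃ τ ∈ Icc a b, p τ = β ∧ ∀ t ∈ Ico a τ, p t < β := by
  set S := Icc a b ∩ p ⁻¹' Ici β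
  have hbdd : BddBelow S := ⟨a, fun t ht => ht.1.1⟩
  have hτ : sInf S ∈ S := (hp.preimage_isClosed_of_isClosed isClosed_Icc isClosed_Ici).csInf_mem
    ⟨b, ⟨hab, le_rfl⟩, hb⟩ hbdd
  have hfirst : ∀ t ∈ Icc a b, β ≤ p t → sInf S ≤ t := fun t ht hpt => csInf_le hbdd ⟨ht, hpt⟩
  obtain ⟨t, ht, hpt⟩ := intermediate_value_Icc hτ.1.1 (hp.mono (Icc_subset_Icc_right hτ.1.2))
    ⟨ha, hτ.2⟩
  have ht' : t = sInf S := le_antisymm ht.2 (hfirst t ⟨ht.1, ht.2.trans hτ.1.2⟩ hpt.ge)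
  refine ⟨sInf S, hτ.1, ht' ▸ hpt, fun t ht => lt_of_not_ge fun hpt => ?_⟩
  exact ht.2.not_ge (hfirst t ⟨ht.1, ht.2.le.trans hτ.1.2⟩ hpt)

theorem exists_eq_forall_gt_of_continuousOn {p : ℝ → ℝ} {a b α : ℝ} (hab : a ≤ b)
    (hp : ContinuousOn p (Icc a b)) (ha : p a ≤ α) (hb : α ≤ p b) :
    ∃ s ∈ Icc a b, p s = α ∧ ∀ t ∈ Ioc s b, α < p t := by
  set A := Icc a b ∩ p ⁻¹' Iic α
  have hbdd : BddAbove A := ⟨b, fun t ht => ht.1.2⟩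
  have hs : sSup A ∈ A := (hp.preimage_isClosed_of_isClosed isClosed_Icc isClosed_Iic).csSup_mem
    ⟨a, ⟨le_rfl, hab⟩, ha⟩ hbdd
  have hlast : ∀ t ∈ Icc a b, p t ≤ α → t ≤ sSup A := fun t ht hpt => le_csSup hbdd ⟨ht, hpt⟩
  obtain ⟨t, ht, hpt⟩ := intermediate_value_Icc hs.1.2 (hp.mono (Icc_subset_Icc_left hs.1.1))
    ⟨hs.2, hb⟩
  have ht' : t = sSup A := le_antisymm (hlast t ⟨hs.1.1.trans ht.1, ht.2⟩ hpt.le) ht.1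
  refine ⟨sSup A, hs.1, ht' ▸ hpt, fun t ht => lt_of_not_ge fun hpt => ?_⟩
  exact ht.1.not_ge (hlast t ⟨hs.1.1.trans ht.1.le, ht.2⟩ hpt)

theorem exists_crossing_of_continuousOn {p : ℝ → ℝ} {a b α β : ℝ} (hab : a ≤ b)
    (hp : ContinuousOn p (Icc a b)) (ha : p a ≤ α) (hαβ : α < β) (hb : β ≤ p b) :
    ∃ s τ, a ≤ s ∧ s < τ ∧ τ ≤ b ∧ p s = α ∧ p τ = β ∧ MapsTo p (Ioo s τ) (Ioo α β) := by
  obtain ⟨τ, hτ, hpτ, hbefore⟩ := exists_eq_forall_lt_of_continuousOn hab hp (ha.trans hαβ.le) hb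
  obtain ⟨s, hs, hps, hafter⟩ := exists_eq_forall_gt_of_continuousOn hτ.1
    (hp.mono (Icc_subset_Icc_right hτ.2)) ha (hpτ ▸ hαβ.le)
  have hsτ : s < τ := lt_of_le_of_ne hs.2 fun h => hαβ.ne (hps ▸ h ▸ hpτ)
  exact ⟨s, τ, hs.1, hsτ, hτ.2, hps, hpτ, fun t ht =>
    ⟨hafter t ⟨ht.1, ht.2.le⟩, hbefore t ⟨hs.1.trans ht.1.le, ht.2⟩⟩⟩

theorem integral_inv_le_sub_of_hasDerivAt {H V p : ℝ → ℝ} {α β t₀ t₁ : ℝ} (hαβ : α < β)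
    (ht : t₀ ≤ t₁) (hH : ContinuousOn H (Icc α β)) (hpos : ∀ x ∈ Icc α β, 0 < H x)
    (hVH : ∀ x ∈ Ioo α β, V x ≤ H x) (hp : ∀ t ∈ Icc t₀ t₁, HasDerivAt p (V (p t)) t)
    (hp₀ : p t₀ ≤ α) (hp₁ : β ≤ p t₁) :
    ∫ x in α..β, (H x)⁻¹ ≤ t₁ - t₀ := by
  have hpc : ContinuousOn p (Icc t₀ t₁) := fun t ht => (hp t ht).continuousAt.continuousWithinAt
  obtain ⟨s, τ, hs, hsτ, hτ, hps, hpτ, hmaps⟩ :=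
    exists_crossing_of_continuousOn ht hpc hp₀ hαβ hp₁
  have hαβ' : α ∈ Icc α β := left_mem_Icc.2 hαβ.le
  have hinv : ContinuousOn (fun x => (H x)⁻¹) (Icc α β) := hH.inv₀ fun x hx => (hpos x hx).ne'
  set Φ := fun x => ∫ y in α..x, (H y)⁻¹
  have hmapsIcc : MapsTo p (Icc s τ) (Icc α β) := by
    intro t ht
    rcases ht.1.eq_or_lt with rfl | hst
    · rwa [hps]
    rcases ht.2.eq_or_lt with rfl | htτ
    · rw [hpτ]; exact right_mem_Icc.2 hαβ.le
    exact Ioo_subset_Icc_self (hmaps ⟨hst, htτ⟩)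
  have hderiv : ∀ t ∈ Ioo s τ, HasDerivAt (Φ ∘ p) ((H (p t))⁻¹ * V (p t)) t := fun t ht =>
    (hasDerivAt_integral_of_continuousOn_Icc hinv hαβ' (hmaps ht)).comp t
      (hp t ⟨hs.trans ht.1.le, ht.2.le.trans hτ⟩)
  have hslope := (convex_Icc s τ).image_sub_le_mul_sub_of_deriv_le (C := 1)
    ((continuousOn_integral_of_continuousOn_Icc hinv hαβ').comp
      (hpc.mono (Icc_subset_Icc hs hτ)) hmapsIcc)
    (fun t ht => by
      rw [interior_Icc] at ht
      exact (hderiv t ht).differentiableAt.differentiableWithinAt)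
    (fun t ht => by
      rw [interior_Icc] at ht
      rw [(hderiv t ht).deriv, inv_mul_le_one₀ (hpos _ (Ioo_subset_Icc_self (hmaps ht)))]
      exact hVH _ (hmaps ht))
    s (left_mem_Icc.2 hsτ.le) τ (right_mem_Icc.2 hsτ.le) hsτ.le
  simp only [Function.comp_apply, hps, hpτ, intervalIntegral.integral_same, sub_zero,
    one_mul] at hslope
  linarith

theorem exists_orderIso_eqOn_Icc {Φ : ℝ → ℝ} {a b : ℝ} (hab : a ≤ b)
    (hΦ : ContinuousOn Φ (Icc a b)) (hmono : StrictMonoOn Φ (Icc a b)) :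
    ∃ e : ℝ ≃o ℝ, EqOn e Φ (Icc a b) := by
  set π : ℝ → ℝ := fun x => max a (min b x)
  have hπ : ∀ x, π x ∈ Icc a b := fun x => ⟨le_max_left _ _, max_le hab (min_le_left _ _)⟩
  have hπid : EqOn π id (Icc a b) := fun x hx => by simp [π, hx.1, hx.2]
  have hπmono : ∀ x y, x ≤ y → π x ≤ π y ∧ π y - π x ≤ y - x := by
    intro x y hxy
    simp only [π, max_def, min_def]
    constructor <;> split_ifs <;> linarith
  set F : ℝ → ℝ := fun x => Φ (π x) + (x - π x)
  have hFmono : StrictMono F := by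
    intro x y hxy
    obtain ⟨hle, hlip⟩ := hπmono x y hxy.le
    rcases hle.eq_or_lt with heq | hlt
    · simp only [F, heq]; linarith
    · have := hmono (hπ x) (hπ y) hlt
      simp only [F]; linarith
  have hFc : Continuous F :=
    (hΦ.comp_continuous (by fun_prop) hπ).add (continuous_id.sub (by fun_prop))
  have hbounds : ∀ x, Φ a + (x - b) ≤ F x ∧ F x ≤ Φ b + (x - a) := fun x =>
    ⟨by linarith [hmono.monotoneOn (left_mem_Icc.2 hab) (hπ x) (hπ x).1, (hπ x).2],
     by linarith [hmono.monotoneOn (hπ x) (right_mem_Icc.2 hab) (hπ x).2, (hπ x).1]⟩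
  have hFsurj : Function.Surjective F := hFc.surjective
    (tendsto_atTop_mono (fun x => (hbounds x).1) (tendsto_atTop_add_const_left _ _
      (tendsto_atTop_add_const_right _ _ tendsto_id)))
    (tendsto_atBot_mono (fun x => (hbounds x).2) (tendsto_atBot_add_const_left _ _
      (tendsto_atBot_add_const_right _ _ tendsto_id)))
  refine ⟨hFmono.orderIsoOfSurjective F hFsurj, fun x hx => ?_⟩
  simp [F, hπid hx]

theorem exists_monotone_hasDerivAt_of_pos {H : ℝ → ℝ} {a b x₀ : ℝ} (hx₀ : x₀ ∈ Icc a b)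
    (hH : ContinuousOn H (Icc a b)) (hpos : ∀ x ∈ Icc a b, 0 < H x) :
    ∃ p : ℝ → ℝ, Monotone p ∧ (∀ x ∈ Icc a b, p (∫ y in x₀..x, (H y)⁻¹) = x) ∧
      ∀ t ∈ Ioo (∫ y in x₀..a, (H y)⁻¹) (∫ y in x₀..b, (H y)⁻¹), HasDerivAt p (H (p t)) t := by
  have hinv : ContinuousOn (fun x => (H x)⁻¹) (Icc a b) := hH.inv₀ fun x hx => (hpos x hx).ne'
  obtain ⟨e, he⟩ := exists_orderIso_eqOn_Icc (hx₀.1.trans hx₀.2)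
    (continuousOn_integral_of_continuousOn_Icc hinv hx₀)
    (strictMonoOn_integral_of_pos hinv hx₀ fun x hx => inv_pos.2 (hpos x (Ioo_subset_Icc_self hx)))
  refine ⟨e.symm, e.symm.monotone, fun x hx => ?_, fun t ht => ?_⟩
  · exact e.symm_apply_eq.2 (he hx).symm
  have hab := hx₀.1.trans hx₀.2
  have hx : e.symm t ∈ Ioo a b :=
    ⟨e.lt_symm_apply.2 ((he (left_mem_Icc.2 hab)).trans_lt ht.1),
      e.symm_apply_lt.2 (ht.2.trans_eq (he (right_mem_Icc.2 hab)).symm)⟩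
  have hΦ := (hasDerivAt_integral_of_continuousOn_Icc hinv hx₀ hx).congr_of_eventuallyEq
    (eventuallyEq_of_mem (Ioo_mem_nhds hx.1 hx.2) fun y hy => he (Ioo_subset_Icc_self hy))
  simpa using hΦ.of_local_left_inverse e.symm.continuous.continuousAt
    (inv_ne_zero (hpos _ (Ioo_subset_Icc_self hx)).ne') (Eventually.of_forall e.apply_symm_apply)

theorem integral_inv_one_sub {x y : ℝ} (hx : x < 1) (hy : y < 1) :
    ∫ t in x..y, (1 - t)⁻¹ = Real.log ((1 - x) / (1 - y)) := by
  rw [intervalIntegral.integral_comp_sub_left (fun t => t⁻¹) 1,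
    integral_inv_of_pos (by linarith) (by linarith)]

theorem exists_lt_integral_inv_of_le_mul_one_sub {H : ℝ → ℝ} {θ L : ℝ} (hθ : θ < 1)
    (hH : ContinuousOn H (Ico θ 1)) (hpos : ∀ x ∈ Ico θ 1, 0 < H x)
    (hle : ∀ x ∈ Ico θ 1, H x ≤ L * (1 - x)) (R : ℝ) :
    ∃ c ∈ Ioo θ 1, R < ∫ x in θ..c, (H x)⁻¹ := by
  have hθ' : θ ∈ Ico θ 1 := ⟨le_rfl, hθ⟩
  have hL : 0 < L :=
    pos_of_mul_pos_left ((hpos θ hθ').trans_le (hle θ hθ')) (sub_pos.2 hθ).le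
  set S := max R 0 + 1
  -- `c` is chosen so that `∫ x in θ..c, (L * (1 - x))⁻¹ = S`
  set c := 1 - (1 - θ) * Real.exp (-(L * S))
  have hexp : Real.exp (-(L * S)) < 1 := Real.exp_lt_one_iff.2 (neg_neg_of_pos (by positivity))
  have h1c : 1 - c = (1 - θ) * Real.exp (-(L * S)) := by ring
  have hc : c ∈ Ioo θ 1 :=
    ⟨by nlinarith [Real.exp_pos (-(L * S))], by nlinarith [Real.exp_pos (-(L * S))]⟩
  have hIcc : Icc θ c ⊆ Ico θ 1 := Icc_subset_Ico_right hc.2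
  have hlin : ∫ x in θ..c, (L * (1 - x))⁻¹ = S := by
    simp_rw [mul_inv]
    rw [intervalIntegral.integral_const_mul, integral_inv_one_sub hθ hc.2, h1c,
      div_mul_cancel_left₀ (sub_pos.2 hθ).ne', Real.log_inv, Real.log_exp]
    field_simp
  have hmono : ∫ x in θ..c, (L * (1 - x))⁻¹ ≤ ∫ x in θ..c, (H x)⁻¹ := by
    refine intervalIntegral.integral_mono_on hc.1.le ?_ ?_ fun x hx =>
      inv_anti₀ (hpos x (hIcc hx)) (hle x (hIcc hx))
    · refine ContinuousOn.intervalIntegrable ((by fun_prop : Continuous fun x => L * (1 - x))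
        |>.continuousOn.inv₀ fun x hx => ?_)
      rw [uIcc_of_le hc.1.le] at hx
      exact mul_ne_zero hL.ne' (sub_pos.2 (hx.2.trans_lt hc.2)).ne'
    · rw [← uIcc_of_le hc.1.le] at hIcc
      exact ((hH.mono hIcc).inv₀ fun x hx => (hpos x (hIcc hx)).ne').intervalIntegrable
  exact ⟨c, hc, by linarith [le_max_left R 0]⟩

theorem exists_hasDerivAt_le_of_integral_inv_le {H : ℝ → ℝ} {a θ L T : ℝ} (ha : a < 0)
    (hθ : θ ∈ Ico 0 1) (hH : ContinuousOn H (Ico a 1)) (hpos : ∀ x ∈ Ico a 1, 0 < H x)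
    (hle : ∀ x ∈ Ico θ 1, H x ≤ L * (1 - x)) (hT : ∫ x in 0..θ, (H x)⁻¹ ≤ T) :
    ∃ p : ℝ → ℝ, p 0 = 0 ∧ (∀ t ∈ Icc 0 T, HasDerivAt p (H (p t)) t) ∧ θ ≤ p T := by
  have hθa : Ico θ 1 ⊆ Ico a 1 := Ico_subset_Ico_left (ha.le.trans hθ.1)
  obtain ⟨c, hc, hTc⟩ := exists_lt_integral_inv_of_le_mul_one_sub hθ.2 (hH.mono hθa)
    (fun x hx => hpos x (hθa hx)) hle (T - ∫ x in 0..θ, (H x)⁻¹)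
  have hac : Icc a c ⊆ Ico a 1 := Icc_subset_Ico_right hc.2
  have h0 : (0 : ℝ) ∈ Icc a c := ⟨ha.le, hθ.1.trans hc.1.le⟩
  have hθ' : θ ∈ Icc a c := ⟨ha.le.trans hθ.1, hc.1.le⟩
  obtain ⟨p, hmono, hinv, hp⟩ := exists_monotone_hasDerivAt_of_pos h0 (hH.mono hac)
    fun x hx => hpos x (hac hx)
  have hinteg : ∀ {x y}, x ∈ Icc a c → y ∈ Icc a c →
      IntervalIntegrable (fun x => (H x)⁻¹) MeasureTheory.volume x y := fun hx hy =>
    intervalIntegrable_of_continuousOn_Icc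
      ((hH.mono hac).inv₀ fun z hz => (hpos z (hac hz)).ne') hx hy
  have hΦa : ∫ x in 0..a, (H x)⁻¹ < 0 := by
    rw [intervalIntegral.integral_symm, neg_lt_zero]
    exact intervalIntegral.intervalIntegral_pos_of_pos_on
      (hinteg (left_mem_Icc.2 (h0.1.trans h0.2)) h0)
      (fun x hx => inv_pos.2 (hpos x ⟨hx.1.le, hx.2.trans_le (hθ.1.trans hθ.2.le)⟩)) ha
  have hΦc : T < ∫ x in 0..c, (H x)⁻¹ := by
    rw [← intervalIntegral.integral_add_adjacent_intervals (hinteg h0 hθ')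
      (hinteg hθ' (right_mem_Icc.2 (ha.le.trans h0.2)))]
    linarith
  refine ⟨p, by simpa using hinv 0 h0, fun t ht => hp t ⟨hΦa.trans_le ht.1, ht.2.trans_lt hΦc⟩, ?_⟩
  calc θ = p (∫ x in 0..θ, (H x)⁻¹) := (hinv θ hθ').symm
    _ ≤ p T := hmono hT

namespace FrequencyModel

noncomputable section

def denom (b1 b2 sh p : ℝ) : ℝ := b1 * (1 - p) * (1 - sh * p) + b2 * p

def drift (b1 b2 d1 d2 sh p : ℝ) : ℝ :=
  p * (1 - p) * (d1 * b2 - d2 * b1 * (1 - sh * p)) / denom b1 b2 sh p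

def gain (b1 b2 K sh p : ℝ) : ℝ := (1 / K) * (b1 * (1 - p) * (1 - sh * p)) / denom b1 b2 sh p

def threshold (b1 b2 d1 d2 sh : ℝ) : ℝ := (1 / sh) * (1 - d1 * b2 / (d2 * b1))

variable {b1 b2 d1 d2 K sh M : ℝ}

theorem threshold_pos (hsh : 0 < sh) (hhigh : d1 * b2 / (d2 * b1) < 1) :
    0 < threshold b1 b2 d1 d2 sh := by
  unfold threshold
  exact mul_pos (one_div_pos.2 hsh) (sub_pos.2 hhigh)

theorem threshold_lt_one (hsh : 0 < sh) (hlow : 1 - sh < d1 * b2 / (d2 * b1)) :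
    threshold b1 b2 d1 d2 sh < 1 := by
  rw [threshold, one_div_mul_eq_div, div_lt_one hsh]
  linarith

theorem denom_pos (hb1 : 0 < b1) (hb2 : 0 < b2) (hsh : sh ≤ 1) {x : ℝ} (hx : x ∈ Icc 0 1) :
    0 < denom b1 b2 sh x := by
  unfold denom
  rcases hx.1.eq_or_lt with rfl | hx0
  · simpa using hb1
  have h1 : 0 ≤ 1 - sh * x := by nlinarith [mul_nonneg (sub_nonneg.2 hsh) hx.1, hx.2]
  nlinarith [mul_nonneg (mul_nonneg hb1.le (sub_nonneg.2 hx.2)) h1, mul_pos hb2 hx0]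

theorem gain_pos (hb1 : 0 < b1) (hb2 : 0 < b2) (hK : 0 < K) (hsh : sh ≤ 1) {x : ℝ}
    (hx : x ∈ Ico 0 1) : 0 < gain b1 b2 K sh x := by
  have h1 : 0 < 1 - sh * x := by nlinarith [mul_nonneg (sub_nonneg.2 hsh) hx.1, hx.2]
  have h2 : 0 < 1 - x := sub_pos.2 hx.2
  exact div_pos (by positivity) (denom_pos hb1 hb2 hsh (Ico_subset_Icc_self hx))

theorem drift_pos (hb1 : 0 < b1) (hb2 : 0 < b2) (hd2 : 0 < d2) (hsh0 : 0 < sh) (hsh1 : sh ≤ 1)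
    (hhigh : d1 * b2 / (d2 * b1) < 1) {x : ℝ} (hx : x ∈ Ioo (threshold b1 b2 d1 d2 sh) 1) :
    0 < drift b1 b2 d1 d2 sh x := by
  have hx0 : 0 < x := (threshold_pos hsh0 hhigh).trans hx.1
  have hsθ : sh * threshold b1 b2 d1 d2 sh = 1 - d1 * b2 / (d2 * b1) := by
    unfold threshold; field_simp
  have hr : d2 * b1 * (d1 * b2 / (d2 * b1)) = d1 * b2 := by field_simp
  have h1 : 0 < d1 * b2 - d2 * b1 * (1 - sh * x) := by
    nlinarith [mul_lt_mul_of_pos_left hx.1 hsh0, mul_pos hd2 hb1]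
  have h2 : 0 < 1 - x := sub_pos.2 hx.2
  exact div_pos (by positivity) (denom_pos hb1 hb2 hsh1 ⟨hx0.le, hx.2.le⟩)

theorem drift_add_mul_gain (x : ℝ) :
    drift b1 b2 d1 d2 sh x + M * gain b1 b2 K sh x = (1 - x) *
      ((x * (d1 * b2 - d2 * b1 * (1 - sh * x)) + M / K * (b1 * (1 - sh * x))) /
        denom b1 b2 sh x) := by
  unfold drift gain
  rw [mul_div_assoc', ← add_div, mul_div_assoc']
  congr 1
  ring

theorem continuousAt_drift_add_mul_gain {x : ℝ} (hx : denom b1 b2 sh x ≠ 0) :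
    ContinuousAt (fun x => drift b1 b2 d1 d2 sh x + M * gain b1 b2 K sh x) x := by
  simp only [drift_add_mul_gain]
  exact continuousAt_id.const_sub 1 |>.mul (ContinuousAt.div (by fun_prop)
    (by unfold denom; fun_prop) hx)

theorem exists_drift_add_mul_gain_le (hb1 : 0 < b1) (hb2 : 0 < b2) (hsh : sh ≤ 1) :
    ∃ L, ∀ x ∈ Icc 0 1, drift b1 b2 d1 d2 sh x + M * gain b1 b2 K sh x ≤ L * (1 - x) := by
  obtain ⟨L, hL⟩ := (isCompact_Icc (a := (0 : ℝ)) (b := 1)).bddAbove_image (f := fun x =>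
    (x * (d1 * b2 - d2 * b1 * (1 - sh * x)) + M / K * (b1 * (1 - sh * x))) / denom b1 b2 sh x)
    (ContinuousOn.div (by fun_prop) (by unfold denom; fun_prop)
      fun x hx => (denom_pos hb1 hb2 hsh hx).ne')
  refine ⟨L, fun x hx => ?_⟩
  rw [drift_add_mul_gain, mul_comm L]
  exact mul_le_mul_of_nonneg_left (hL ⟨x, hx, rfl⟩) (sub_nonneg.2 hx.2)

theorem drift_add_mul_gain_pos (hb1 : 0 < b1) (hb2 : 0 < b2) (hd2 : 0 < d2) (hK : 0 < K)
    (hsh0 : 0 < sh) (hsh1 : sh ≤ 1) (hhigh : d1 * b2 / (d2 * b1) < 1) {m : ℝ}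
    (hm : ∀ x ∈ Icc 0 (threshold b1 b2 d1 d2 sh), -drift b1 b2 d1 d2 sh x / gain b1 b2 K sh x ≤ m)
    (hM : m < M) {x : ℝ} (hx : x ∈ Ico 0 1) :
    0 < drift b1 b2 d1 d2 sh x + M * gain b1 b2 K sh x := by
  have hg := gain_pos hb1 hb2 hK hsh1 hx
  rcases le_or_gt x (threshold b1 b2 d1 d2 sh) with hxθ | hxθ
  · have := (div_lt_iff₀ hg).1 ((hm x ⟨hx.1, hxθ⟩).trans_lt hM)
    linarith
  · have hm0 := hm 0 ⟨le_rfl, (threshold_pos hsh0 hhigh).le⟩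
    simp only [drift, zero_mul, zero_div, neg_zero] at hm0
    have := drift_pos hb1 hb2 hd2 hsh0 hsh1 hhigh ⟨hxθ, hx.2⟩
    have := mul_pos (hm0.trans_lt hM) hg
    linarith

-- `HasDerivAt` at time `0` is two-sided, so the solution must start inside the region where
-- the field is continuous and positive, hence the margin `a < 0`.
theorem exists_neg_continuousOn_Ico_pos (hb1 : 0 < b1) (hb2 : 0 < b2) (hd2 : 0 < d2)
    (hK : 0 < K) (hsh0 : 0 < sh) (hsh1 : sh ≤ 1) (hhigh : d1 * b2 / (d2 * b1) < 1) {m : ℝ}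
    (hm : ∀ x ∈ Icc 0 (threshold b1 b2 d1 d2 sh), -drift b1 b2 d1 d2 sh x / gain b1 b2 K sh x ≤ m)
    (hM : m < M) : ∃ a < 0,
      ContinuousOn (fun x => drift b1 b2 d1 d2 sh x + M * gain b1 b2 K sh x) (Ico a 1) ∧
        ∀ x ∈ Ico a 1, 0 < drift b1 b2 d1 d2 sh x + M * gain b1 b2 K sh x := by
  have hpos := fun x (hx : x ∈ Ico (0 : ℝ) 1) =>
    drift_add_mul_gain_pos hb1 hb2 hd2 hK hsh0 hsh1 hhigh hm hM hx
  have hD0 := denom_pos hb1 hb2 hsh1 (left_mem_Icc.2 zero_le_one)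
  have hev : ∀ᶠ x in 𝓝 0, 0 < denom b1 b2 sh x ∧
      0 < drift b1 b2 d1 d2 sh x + M * gain b1 b2 K sh x :=
    ((by unfold denom; fun_prop : Continuous (denom b1 b2 sh)).continuousAt.eventually
      (lt_mem_nhds hD0)).and ((continuousAt_drift_add_mul_gain hD0.ne').eventually
        (lt_mem_nhds (hpos 0 ⟨le_rfl, zero_lt_one⟩)))
  obtain ⟨a, ha, hsub⟩ := mem_nhdsLT_iff_exists_Ico_subset.1 (nhdsWithin_le_nhds hev)
  have hgood : ∀ x ∈ Ico a 1, 0 < denom b1 b2 sh x ∧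
      0 < drift b1 b2 d1 d2 sh x + M * gain b1 b2 K sh x := fun x hx =>
    (lt_or_ge x 0).elim (fun hx0 => hsub ⟨hx.1, hx0⟩)
      fun hx0 => ⟨denom_pos hb1 hb2 hsh1 ⟨hx0, hx.2.le⟩, hpos x ⟨hx0, hx.2⟩⟩
  exact ⟨a, ha, fun x hx => (continuousAt_drift_add_mul_gain (hgood x hx).1.ne').continuousWithinAt,
    fun x hx => (hgood x hx).2⟩

end

end FrequencyModel

open FrequencyModel in
theorem stmt_9_general
    (b1 b2 d1 d2 K sh : ℝ)
    (hb1 : 0 < b1) (hb2 : 0 < b2) (hd2 : 0 < d2)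
    (hK : 0 < K) (hsh0 : 0 < sh) (hsh1 : sh ≤ 1)
    (hlow : 1 - sh < d1 * b2 / (d2 * b1)) (hhigh : d1 * b2 / (d2 * b1) < 1)
    (f g : ℝ → ℝ)
    (hf : ∀ p, f p = p * (1 - p) * (d1 * b2 - d2 * b1 * (1 - sh * p)) /
      (b1 * (1 - p) * (1 - sh * p) + b2 * p))
    (hg : ∀ p, g p = (1 / K) * (b1 * (1 - p) * (1 - sh * p)) /
      (b1 * (1 - p) * (1 - sh * p) + b2 * p))
    (θ : ℝ) (hθ : θ = (1 / sh) * (1 - d1 * b2 / (d2 * b1)))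
    (mstar : ℝ)
    (hmstar : IsGreatest ((fun p => -f p / g p) '' Set.Icc 0 θ) mstar)
    (T M : ℝ) (hT : 0 < T) (hM : mstar < M)
    (Tstar : ℝ) (hTstar : Tstar = ∫ ν in (0:ℝ)..θ, (f ν + M * g ν)⁻¹) :
    (∃ ubar ∈ Set.Ioc mstar M, ∃ p : ℝ → ℝ, p 0 = 0 ∧
        (∀ t ∈ Set.Icc (0:ℝ) T, HasDerivAt p (f (p t) + ubar * g (p t)) t) ∧
        θ ≤ p T) ↔ Tstar ≤ T := by
  obtain rfl : f = drift b1 b2 d1 d2 sh := funext hf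
  obtain rfl : g = gain b1 b2 K sh := funext hg
  obtain rfl : θ = threshold b1 b2 d1 d2 sh := hθ
  subst hTstar
  have hθ0 := threshold_pos (b1 := b1) (b2 := b2) (d1 := d1) (d2 := d2) hsh0 hhigh
  have hθ1 := threshold_lt_one (b1 := b1) (b2 := b2) (d1 := d1) (d2 := d2) hsh0 hlow
  obtain ⟨a, ha, hHcont, hHpos⟩ := exists_neg_continuousOn_Ico_pos hb1 hb2 hd2 hK hsh0 hsh1
    hhigh (fun x hx => hmstar.2 ⟨x, hx, rfl⟩) hM
  have h0θ : Icc 0 (threshold b1 b2 d1 d2 sh) ⊆ Ico a 1 := Icc_subset_Ico ha.le hθ1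
  constructor
  · rintro ⟨u, ⟨-, hu⟩, p, hp0, hp, hpT⟩
    simpa using integral_inv_le_sub_of_hasDerivAt (V := fun x => drift b1 b2 d1 d2 sh x +
      u * gain b1 b2 K sh x) hθ0 hT.le (hHcont.mono h0θ) (fun x hx => hHpos x (h0θ hx))
      (fun x hx => add_le_add_right (mul_le_mul_of_nonneg_right hu
        (gain_pos hb1 hb2 hK hsh1 ⟨hx.1.le, hx.2.trans hθ1⟩).le) _) hp hp0.le hpT
  · intro hTstar
    obtain ⟨L, hL⟩ := exists_drift_add_mul_gain_le (d1 := d1) (d2 := d2) (K := K) (M := M)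
      hb1 hb2 hsh1
    obtain ⟨p, hp0, hp, hpT⟩ := exists_hasDerivAt_le_of_integral_inv_le ha ⟨hθ0.le, hθ1⟩ hHcont
      hHpos (fun x hx => hL x ⟨hθ0.le.trans hx.1, hx.2.le⟩) hTstar
    exact ⟨M, ⟨hM, le_rfl⟩, p, hp0, hp, hpT⟩

/-- for fixed T > 0 and M > m*, there exists a constant control ū ∈ (m*,M]
whose solution of p' = f(p) + ū g(p), p(0)=0, satisfies p(T) ≥ θ if and only if T ≥ T*. -/
theorem stmt_9
    (b1 b2 d1 d2 K sh : ℝ)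
    (hb1 : 0 < b1) (hb2 : 0 < b2) (hd1 : 0 < d1) (hd2 : 0 < d2)
    (hK : 0 < K) (hsh0 : 0 < sh) (hsh1 : sh ≤ 1)
    (hlow : 1 - sh < d1 * b2 / (d2 * b1)) (hhigh : d1 * b2 / (d2 * b1) < 1)
    (f g : ℝ → ℝ)
    (hf : ∀ p, f p = p * (1 - p) * (d1 * b2 - d2 * b1 * (1 - sh * p)) /
      (b1 * (1 - p) * (1 - sh * p) + b2 * p))
    (hg : ∀ p, g p = (1 / K) * (b1 * (1 - p) * (1 - sh * p)) /
      (b1 * (1 - p) * (1 - sh * p) + b2 * p))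
    (θ : ℝ) (hθ : θ = (1 / sh) * (1 - d1 * b2 / (d2 * b1)))
    (mstar : ℝ)
    (hmstar : IsGreatest ((fun p => -f p / g p) '' Set.Icc 0 θ) mstar)
    (T M : ℝ) (hT : 0 < T) (hM : mstar < M)
    (Tstar : ℝ) (hTstar : Tstar = ∫ ν in (0:ℝ)..θ, (f ν + M * g ν)⁻¹) :
    (∃ ubar ∈ Set.Ioc mstar M, ∃ p : ℝ → ℝ, p 0 = 0 ∧
        (∀ t ∈ Set.Icc (0:ℝ) T, HasDerivAt p (f (p t) + ubar * g (p t)) t) ∧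
        θ ≤ p T) ↔ Tstar ≤ T :=
  stmt_9_general b1 b2 d1 d2 K sh hb1 hb2 hd2 hK hsh0 hsh1 hlow hhigh f g hf hg θ hθ mstar hmstar T
    M hT hM Tstar hTstar
end

section
/- (Optimality part of Theorem 1.) Assume M > m* and T ≥ T*. Every measurable control u : [0,T] → [0,M] whose associated state p_u satisfies p_u(T) = θ has total cost ∫₀^T u(t) dt ≥ M·T*. Consequently the minimal value of ∫₀^T u over admissible controls reaching θ at time T equals M·T*. -/
/-!
Along an admissible trajectory reaching `θ` the state never leaves `[0, θ]`: just outside this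
interval `f` and `g` are nonnegative, so `p` can neither cross `0` downwards nor come back down
through `θ`. On `[0, θ]` we have `f ≤ 0` and `u ≤ M`, hence `M p' ≤ u (f + M g)(p)`. Dividing by
`(f + M g)(p) > 0`, integrating and substituting `ν = p(t)` (legitimate because `p` is absolutely
continuous) gives `∫ u ≥ M ∫₀^θ dν / (f + M g)(ν) = M T*`. The bound is attained by the bang-bang
control `u = M` on `[0, T*)`, `u = 0` afterwards, whose trajectory is the inverse of the travel
time `ν ↦ ∫₀^ν 1 / (f + M g)` until `T*` and then rests at the equilibrium `θ`.
-/

/-- A pair (u,p) is an admissible control/state pair on [0,T] with control bound M: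
u is measurable with values in [0,M], and p is the (Carathéodory / absolutely
continuous) solution of p' = f(p) + u·g(p) a.e. on (0,T) with p(0) = 0, expressed
through the equivalent integral formulation. -/
def IsTrajectory (f g : ℝ → ℝ) (T M : ℝ) (u p : ℝ → ℝ) : Prop :=
  Measurable u ∧ (∀ t, u t ∈ Set.Icc (0:ℝ) M) ∧
  ContinuousOn p (Set.Icc 0 T) ∧ p 0 = 0 ∧
  ∀ t ∈ Set.Icc (0:ℝ) T, p t = ∫ s in (0:ℝ)..t, (f (p s) + u s * g (p s))

open MeasureTheory Set Filter
open scoped NNReal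

theorem LipschitzOnWith.comp_absolutelyContinuousOnInterval {X Y : Type*} [PseudoMetricSpace X]
    [PseudoMetricSpace Y] {F : X → Y} {P : ℝ → X} {K : ℝ≥0} {s : Set X} {a b : ℝ}
    (hF : LipschitzOnWith K F s) (hP : AbsolutelyContinuousOnInterval P a b)
    (hPs : MapsTo P (uIcc a b) s) : AbsolutelyContinuousOnInterval (F ∘ P) a b := by
  unfold AbsolutelyContinuousOnInterval at hP ⊢
  have hK := Filter.Tendsto.const_mul (K : ℝ) hP
  rw [mul_zero] at hK
  refine squeeze_zero' (Eventually.of_forall fun _ ↦ Finset.sum_nonneg fun _ _ ↦ dist_nonneg)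
    ?_ hK
  refine eventually_inf_principal.mpr (Eventually.of_forall fun E hE ↦ ?_)
  rw [Finset.mul_sum]
  exact Finset.sum_le_sum fun i hi ↦
    hF.dist_le_mul _ (hPs (hE.1 i hi).1) _ (hPs (hE.1 i hi).2)

theorem AbsolutelyContinuousOnInterval.integral_comp_mul_deriv {P ψ : ℝ → ℝ} {a b : ℝ}
    (hP : AbsolutelyContinuousOnInterval P a b) (hψ : Continuous ψ) :
    ∫ x in a..b, ψ (P x) * deriv P x = ∫ y in P a..P b, ψ y := by
  set F : ℝ → ℝ := fun y ↦ ∫ z in P a..y, ψ z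
  have hF : ∀ y, HasDerivAt F (ψ y) y := fun y ↦
    intervalIntegral.integral_hasDerivAt_right (hψ.intervalIntegrable _ _)
      hψ.aestronglyMeasurable.stronglyMeasurableAtFilter hψ.continuousAt
  have hFC1 : ContDiff ℝ 1 F :=
    contDiff_one_iff_deriv.mpr ⟨fun y ↦ (hF y).differentiableAt,
      by simpa [funext fun y ↦ (hF y).deriv] using hψ⟩
  obtain ⟨K, hK⟩ := hFC1.locallyLipschitz.locallyLipschitzOn.exists_lipschitzOnWith_of_compact
    (isCompact_uIcc.image_of_continuousOn hP.continuousOn)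
  have hFP := hK.comp_absolutelyContinuousOnInterval hP (mapsTo_image P _)
  calc ∫ x in a..b, ψ (P x) * deriv P x = ∫ x in a..b, deriv (F ∘ P) x := by
        refine intervalIntegral.integral_congr_ae ?_
        filter_upwards [hP.ae_differentiableAt] with x hx hxab
        exact (((hF (P x)).comp x (hx (uIoc_subset_uIcc hxab)).hasDerivAt).deriv).symm
    _ = ∫ y in P a..P b, ψ y := by
        rw [hFP.integral_deriv_eq_sub]
        simp [F]

theorem IntervalIntegrable.integral_comp_primitive_mul {h ψ : ℝ → ℝ} {a b : ℝ}
    (hh : IntervalIntegrable h volume a b) (hψ : Continuous ψ) :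
    ∫ x in a..b, ψ (∫ t in a..x, h t) * h x = ∫ y in 0..∫ t in a..b, h t, ψ y := by
  have hP := hh.absolutelyContinuousOnInterval_intervalIntegral (c := a) left_mem_uIcc
  rw [← intervalIntegral.integral_same (a := a) (f := h), ← hP.integral_comp_mul_deriv hψ]
  refine intervalIntegral.integral_congr_ae ?_
  filter_upwards [hh.ae_hasDerivAt_integral] with x hx hxab
  rw [(hx (uIoc_subset_uIcc hxab) a left_mem_uIcc).deriv]

theorem le_of_eq_integral_of_nonneg {p h : ℝ → ℝ} {a b s t : ℝ}
    (hp : ∀ x ∈ Icc a b, p x = ∫ y in a..x, h y) (hh : IntervalIntegrable h volume a b)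
    (hs : s ∈ Icc a b) (ht : t ∈ Icc a b) (hst : s ≤ t) (hpos : ∀ x ∈ Ioo s t, 0 ≤ h x) :
    p s ≤ p t := by
  have hsub : ∀ x ∈ Icc a b, IntervalIntegrable h volume a x := fun x hx ↦
    hh.mono_set (uIcc_subset_uIcc left_mem_uIcc (Icc_subset_uIcc hx))
  rw [← sub_nonneg, hp t ht, hp s hs,
    intervalIntegral.integral_interval_sub_left (hsub t ht) (hsub s hs),
    intervalIntegral.integral_of_le hst, integral_Ioc_eq_integral_Ioo]
  exact setIntegral_nonneg measurableSet_Ioo hpos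

theorem ContinuousOn.le_of_le_left_of_monotone_below {p : ℝ → ℝ} {a b c l : ℝ}
    (hp : ContinuousOn p (Icc a b)) (hl : l < c) (ha : c ≤ p a)
    (hexc : ∀ s ∈ Icc a b, ∀ t ∈ Icc a b, s ≤ t → MapsTo p (Ioo s t) (Ioo l c) → p s ≤ p t) :
    ∀ t ∈ Icc a b, c ≤ p t := by
  by_contra! ⟨t₀, ht₀, hpt₀⟩
  -- `t₁` is the last time before `t₀` at which `p ≥ c`, `t₂` the first time after `t₁` at
  -- which `p` has come down to the level `y`; in between `p` stays in the band `(l, c)`.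
  have hclosed : ∀ u v (K : Set ℝ), Icc u v ⊆ Icc a b → IsClosed K →
      IsClosed (Icc u v ∩ p ⁻¹' K) :=
    fun u v K huv hK ↦ (hp.mono huv).preimage_isClosed_of_isClosed isClosed_Icc hK
  set S := Icc a t₀ ∩ p ⁻¹' Ici c
  have hS : IsClosed S := hclosed a t₀ _ (Icc_subset_Icc_right ht₀.2) isClosed_Ici
  have ht₁ : sSup S ∈ S := hS.csSup_mem ⟨a, ⟨le_rfl, ht₀.1⟩, ha⟩ ⟨t₀, fun x hx ↦ hx.1.2⟩
  set t₁ := sSup S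
  set y := max (p t₀) ((l + c) / 2)
  set S' := Icc t₁ t₀ ∩ p ⁻¹' Iic y
  have hS' : IsClosed S' := hclosed t₁ t₀ _ (Icc_subset_Icc ht₁.1.1 ht₀.2) isClosed_Iic
  have ht₂ : sInf S' ∈ S' :=
    hS'.csInf_mem ⟨t₀, ⟨ht₁.1.2, le_rfl⟩, show p t₀ ≤ y from le_max_left _ _⟩
      ⟨t₁, fun x hx ↦ hx.1.1⟩
  set t₂ := sInf S'
  have hy : y < c := max_lt hpt₀ (by linarith)
  have hband : MapsTo p (Ioo t₁ t₂) (Ioo l c) := by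
    intro x hx
    have hxt₀ : x ≤ t₀ := hx.2.le.trans ht₂.1.2
    have hxS : x ∉ S := fun h ↦ (le_csSup ⟨t₀, fun z hz ↦ hz.1.2⟩ h).not_gt hx.1
    have hxS' : x ∉ S' := fun h ↦ (csInf_le ⟨t₁, fun z hz ↦ hz.1.1⟩ h).not_gt hx.2
    have hax : a ≤ x := ht₁.1.1.trans hx.1.le
    simp only [S, S', mem_inter_iff, mem_Icc, mem_preimage, mem_Ici, mem_Iic, not_and,
      not_le] at hxS hxS'
    exact ⟨by linarith [le_max_right (p t₀) ((l + c) / 2), hxS' ⟨hx.1.le, hxt₀⟩],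
      hxS ⟨hax, hxt₀⟩⟩
  have := hexc t₁ ⟨ht₁.1.1, ht₁.1.2.trans ht₀.2⟩ t₂
    ⟨ht₁.1.1.trans ht₂.1.1, ht₂.1.2.trans ht₀.2⟩ ht₂.1.1 hband
  have hpt₁ : c ≤ p t₁ := ht₁.2
  have hpt₂ : p t₂ ≤ y := ht₂.2
  linarith

theorem ContinuousOn.le_of_right_le_of_monotone_above {p : ℝ → ℝ} {a b c r : ℝ}
    (hp : ContinuousOn p (Icc a b)) (hr : c < r) (hb : p b ≤ c)
    (hexc : ∀ s ∈ Icc a b, ∀ t ∈ Icc a b, s ≤ t → MapsTo p (Ioo s t) (Ioo c r) → p s ≤ p t) :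
    ∀ t ∈ Icc a b, p t ≤ c := by
  -- time reversal `t ↦ -t` together with `p ↦ -p` turns this into the previous lemma
  have hq : ContinuousOn (fun t ↦ -p (-t)) (Icc (-b) (-a)) :=
    (hp.comp continuousOn_neg fun _ ht ↦ neg_mem_Icc_iff.2 ht).neg
  have hrev := hq.le_of_le_left_of_monotone_below (neg_lt_neg hr) (by simpa using hb)
    fun s hs t ht hst hmaps ↦ neg_le_neg <| hexc (-t) (neg_mem_Icc_iff.2 ht) (-s)
      (neg_mem_Icc_iff.2 hs) (neg_le_neg hst) fun x hx ↦ by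
        simpa [neg_mem_Ioo_iff, and_comm] using hmaps (neg_mem_Ioo_iff.2 hx)
  intro t ht
  simpa using hrev (-t) (neg_mem_Icc_iff.2 (by rwa [neg_neg, neg_neg]))

theorem exists_monotone_hasDerivAt_comp {φ : ℝ → ℝ} {C : ℝ} (hφ : Continuous φ)
    (hpos : ∀ x, 0 < φ x) (hC : ∀ x, φ x ≤ C) :
    ∃ q : ℝ → ℝ, Monotone q ∧ (∀ t, HasDerivAt q (φ (q t)) t) ∧
      ∀ x, q (∫ y in 0..x, (φ y)⁻¹) = x := by
  -- `q` is the inverse of the travel time `F x = ∫₀ˣ 1/φ`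
  set F : ℝ → ℝ := fun x ↦ ∫ y in 0..x, (φ y)⁻¹
  have hψ : Continuous fun y ↦ (φ y)⁻¹ := hφ.inv₀ fun x ↦ (hpos x).ne'
  have hF : ∀ x, HasDerivAt F (φ x)⁻¹ x := fun x ↦
    intervalIntegral.integral_hasDerivAt_right (hψ.intervalIntegrable _ _)
      hψ.aestronglyMeasurable.stronglyMeasurableAtFilter hψ.continuousAt
  have hFcont : Continuous F := continuous_iff_continuousAt.mpr fun x ↦ (hF x).continuousAt
  have hFmono : StrictMono F :=
    strictMono_of_deriv_pos fun x ↦ (hF x).deriv ▸ inv_pos.mpr (hpos x)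
  have hslope : ∀ x y, x ≤ y → C⁻¹ * (y - x) ≤ F y - F x := by
    intro x y hxy
    rw [intervalIntegral.integral_interval_sub_left (hψ.intervalIntegrable _ _)
      (hψ.intervalIntegrable _ _)]
    have hconst : ∫ _ in x..y, C⁻¹ = C⁻¹ * (y - x) := by simp [mul_comm]
    rw [← hconst]
    exact intervalIntegral.integral_mono_on hxy intervalIntegrable_const
      (hψ.intervalIntegrable _ _) fun z _ ↦ inv_anti₀ (hpos z) (hC z)
  have hC0 : 0 < C⁻¹ := inv_pos.mpr ((hpos 0).trans_le (hC 0))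
  have hsurj : Function.Surjective F := by
    refine hFcont.surjective ?_ ?_
    · refine tendsto_atTop_mono' _ ?_ (tendsto_atTop_add_const_left _ (F 0)
        (tendsto_id.const_mul_atTop hC0))
      filter_upwards [eventually_ge_atTop 0] with x hx
      show F 0 + C⁻¹ * x ≤ F x
      linarith [hslope 0 x hx]
    · refine tendsto_atBot_mono' _ ?_ (tendsto_atBot_add_const_left _ (F 0)
        (tendsto_id.const_mul_atBot hC0))
      filter_upwards [eventually_le_atBot 0] with x hx
      show F x ≤ F 0 + C⁻¹ * x
      linarith [hslope x 0 hx]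
  set E := hFmono.orderIsoOfSurjective F hsurj
  refine ⟨E.symm, E.symm.monotone, fun t ↦ ?_, E.symm_apply_apply⟩
  simpa using (hF (E.symm t)).of_local_left_inverse E.symm.continuous.continuousAt
    (inv_pos.mpr (hpos _)).ne' (Eventually.of_forall E.apply_symm_apply)

theorem integral_indicator_Iio_of_hasDerivAt {q q' : ℝ → ℝ} {a b c : ℝ}
    (hq : ∀ t, HasDerivAt q (q' t) t) (hq' : Continuous q') :
    ∫ t in a..b, (Iio c).indicator q' t = q (min b c) - q (min a c) := by
  have hcont : Continuous q := continuous_iff_continuousAt.mpr fun t ↦ (hq t).continuousAt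
  refine integral_eq_of_hasDerivAt_off_countable (fun t ↦ q (min t c)) _
    (countable_singleton c) (hcont.comp (continuous_id.min continuous_const)).continuousOn
    (fun t ht ↦ ?_) ?_
  · rcases lt_or_gt_of_ne ht.2 with htc | htc
    · rw [indicator_of_mem (show t ∈ Iio c from htc)]
      refine (hq t).congr_of_eventuallyEq ?_
      filter_upwards [eventually_lt_nhds htc] with s hs
      rw [min_eq_left hs.le]
    · rw [indicator_of_notMem (show t ∉ Iio c from not_lt.mpr htc.le)]
      refine (hasDerivAt_const t (q c)).congr_of_eventuallyEq ?_
      filter_upwards [eventually_gt_nhds htc] with s hs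
      rw [min_eq_right hs.le]
  · have := hq'.intervalIntegrable (μ := volume) a b
    exact ⟨this.1.indicator measurableSet_Iio, this.2.indicator measurableSet_Iio⟩

namespace IsTrajectory

variable {f g u p : ℝ → ℝ} {T M θ : ℝ}

theorem intervalIntegrable (hup : IsTrajectory f g T M u p) (hT : 0 ≤ T) (hpT : p T ≠ 0) :
    IntervalIntegrable (fun s ↦ f (p s) + u s * g (p s)) volume 0 T := by
  -- otherwise the integral equation would give the junk value `p T = 0`
  by_contra hni
  exact hpT (by rw [hup.2.2.2.2 T ⟨hT, le_rfl⟩, intervalIntegral.integral_undef hni])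

theorem mapsTo_Icc {l r : ℝ} (hup : IsTrajectory f g T M u p)
    (hint : IntervalIntegrable (fun s ↦ f (p s) + u s * g (p s)) volume 0 T) (hpT : p T = θ)
    (hl : l < 0) (hr : θ < r) (hfg : ∀ x ∈ Ioo l 0 ∪ Ioo θ r, 0 ≤ f x ∧ 0 ≤ g x) :
    MapsTo p (Icc 0 T) (Icc 0 θ) := by
  obtain ⟨-, hu, hpc, hp0, hp⟩ := hup
  have hexc : ∀ B ⊆ Ioo l 0 ∪ Ioo θ r, ∀ s ∈ Icc 0 T, ∀ t ∈ Icc 0 T, s ≤ t →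
      MapsTo p (Ioo s t) B → p s ≤ p t :=
    fun B hB s hs t ht hst hmaps ↦ le_of_eq_integral_of_nonneg hp hint hs ht hst fun x hx ↦ by
      obtain ⟨hf, hg⟩ := hfg _ (hB (hmaps hx))
      exact add_nonneg hf (mul_nonneg (hu x).1 hg)
  exact fun t ht ↦
    ⟨hpc.le_of_le_left_of_monotone_below hl hp0.ge (hexc _ subset_union_left) t ht,
      hpc.le_of_right_le_of_monotone_above hr hpT.le (hexc _ subset_union_right) t ht⟩

theorem cost_ge {φ : ℝ → ℝ} (hup : IsTrajectory f g T M u p) (hT : 0 ≤ T)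
    (hint : IntervalIntegrable (fun s ↦ f (p s) + u s * g (p s)) volume 0 T) (hpT : p T = θ)
    (hinv : MapsTo p (Icc 0 T) (Icc 0 θ)) (hf : ∀ x ∈ Icc 0 θ, f x ≤ 0) (hφ : Continuous φ)
    (hφpos : ∀ x, 0 < φ x) (hφeq : ∀ x ∈ Icc 0 θ, f x + M * g x = φ x) :
    M * ∫ x in 0..θ, (φ x)⁻¹ ≤ ∫ t in 0..T, u t := by
  obtain ⟨hum, hu, hpc, -, hp⟩ := hup
  set h := fun s ↦ f (p s) + u s * g (p s)
  have hψ : Continuous fun x ↦ (φ x)⁻¹ := hφ.inv₀ fun x ↦ (hφpos x).ne'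
  have hpoint : ∀ s ∈ Icc 0 T, M * ((φ (p s))⁻¹ * h s) ≤ u s := by
    intro s hs
    have hps := hinv hs
    -- `(M - u) f ≤ 0` rearranges to `M (f + u g) ≤ u (f + M g)`
    have key : M * h s ≤ φ (p s) * u s := by
      rw [← hφeq _ hps]
      nlinarith [mul_nonpos_of_nonneg_of_nonpos (sub_nonneg.2 (hu s).2) (hf _ hps)]
    rwa [← mul_assoc, mul_comm M, mul_assoc, inv_mul_le_iff₀ (hφpos _)]
  have hu_int : IntervalIntegrable u volume 0 T :=
    (intervalIntegrable_const (c := M)).mono_fun' hum.aestronglyMeasurable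
      (ae_of_all _ fun s ↦ (abs_of_nonneg (hu s).1).trans_le (hu s).2)
  calc M * ∫ x in 0..θ, (φ x)⁻¹ = ∫ s in 0..T, M * ((φ (p s))⁻¹ * h s) := by
        rw [intervalIntegral.integral_const_mul, ← hpT, hp T ⟨hT, le_rfl⟩,
          ← hint.integral_comp_primitive_mul hψ]
        congr 1
        refine intervalIntegral.integral_congr fun s hs ↦ ?_
        rw [uIcc_of_le hT] at hs
        simp only [h, ← hp s hs]
    _ ≤ ∫ s in 0..T, u s :=
        intervalIntegral.integral_mono_on hT
          ((hint.continuousOn_mul (hψ.comp_continuousOn (uIcc_of_le hT ▸ hpc))).const_mul M)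
          hu_int hpoint

end IsTrajectory

theorem exists_isTrajectory_cost_eq {f g φ : ℝ → ℝ} {T M θ C : ℝ} (hφ : Continuous φ)
    (hφpos : ∀ x, 0 < φ x) (hC : ∀ x, φ x ≤ C) (hφeq : ∀ x ∈ Icc 0 θ, f x + M * g x = φ x)
    (hfθ : f θ = 0) (hM : 0 ≤ M) (hθ : 0 ≤ θ) (hT : ∫ x in 0..θ, (φ x)⁻¹ ≤ T) :
    ∃ u p, IsTrajectory f g T M u p ∧ p T = θ ∧
      ∫ t in 0..T, u t = M * ∫ x in 0..θ, (φ x)⁻¹ := by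
  obtain ⟨q, hqmono, hq, hqF⟩ := exists_monotone_hasDerivAt_comp hφ hφpos hC
  set T' := ∫ x in 0..θ, (φ x)⁻¹
  have hT' : 0 ≤ T' := intervalIntegral.integral_nonneg hθ fun x _ ↦ (inv_pos.2 (hφpos x)).le
  have hq0 : q 0 = 0 := by simpa using hqF 0
  have hqT' : q T' = θ := hqF θ
  have hqcont : Continuous q := continuous_iff_continuousAt.2 fun t ↦ (hq t).continuousAt
  -- bang-bang: full control until the flow of `f + M g` reaches `θ` at time `T'`, then none
  refine ⟨(Iio T').indicator fun _ ↦ M, fun t ↦ q (min t T'), ⟨?_, ?_, ?_, ?_, ?_⟩, ?_, ?_⟩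
  · exact measurable_const.indicator measurableSet_Iio
  · intro t
    by_cases ht : t < T' <;> simp [ht, hM]
  · exact (hqcont.comp (continuous_id.min continuous_const)).continuousOn
  · simp [min_eq_left hT', hq0]
  · intro t ht
    have := integral_indicator_Iio_of_hasDerivAt (a := 0) (b := t) (c := T') hq
      (hφ.comp hqcont)
    rw [min_eq_left hT', hq0, sub_zero] at this
    refine this.symm.trans (intervalIntegral.integral_congr fun s hs ↦ ?_)
    rw [uIcc_of_le ht.1] at hs
    by_cases hsT : s < T'
    · have hqs : q s ∈ Icc 0 θ := ⟨hq0 ▸ hqmono hs.1, hqT' ▸ hqmono hsT.le⟩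
      simp [hsT, min_eq_left hsT.le, hφeq _ hqs]
    · simp [hsT, min_eq_right (not_lt.1 hsT), hqT', hfθ]
  · simp [min_eq_right hT, hqT']
  · have := integral_indicator_Iio_of_hasDerivAt (q := fun t ↦ M * t) (q' := fun _ ↦ M)
      (a := 0) (b := T) (c := T') (fun t ↦ by simpa using (hasDerivAt_id t).const_mul M)
      continuous_const
    simpa [min_eq_right hT, min_eq_left hT'] using this

theorem ContinuousOn.exists_continuous_pos_extension {φ : ℝ → ℝ} {a b : ℝ} (hab : a ≤ b)
    (hφ : ContinuousOn φ (Icc a b)) (hpos : ∀ x ∈ Icc a b, 0 < φ x) :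
    ∃ φ' : ℝ → ℝ, Continuous φ' ∧ (∀ x, 0 < φ' x) ∧ (∃ C, ∀ x, φ' x ≤ C) ∧
      EqOn φ' φ (Icc a b) := by
  obtain ⟨C, hC⟩ := isCompact_Icc.exists_bound_of_continuousOn hφ
  refine ⟨IccExtend hab ((Icc a b).domRestrict φ), hφ.domRestrict.Icc_extend', fun x ↦ ?_,
    ⟨C, fun x ↦ ?_⟩, fun x hx ↦ IccExtend_of_mem _ _ hx⟩
  · exact hpos _ (projIcc a b hab x).2
  · exact (le_abs_self _).trans (hC _ (projIcc a b hab x).2)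

theorem isLeast_cost {f g : ℝ → ℝ} {T M θ l r : ℝ} (hθ : 0 < θ) (hM : 0 ≤ M) (hl : l < 0)
    (hr : θ < r) (hfg : ∀ x ∈ Ioo l 0 ∪ Ioo θ r, 0 ≤ f x ∧ 0 ≤ g x)
    (hf : ∀ x ∈ Icc 0 θ, f x ≤ 0) (hfθ : f θ = 0)
    (hφ : ContinuousOn (fun x ↦ f x + M * g x) (Icc 0 θ))
    (hφpos : ∀ x ∈ Icc 0 θ, 0 < f x + M * g x) (hT : ∫ x in 0..θ, (f x + M * g x)⁻¹ ≤ T) :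
    IsLeast {c | ∃ u p, IsTrajectory f g T M u p ∧ p T = θ ∧ c = ∫ t in 0..T, u t}
      (M * ∫ x in 0..θ, (f x + M * g x)⁻¹) := by
  obtain ⟨φ, hφc, hφpos', ⟨C, hC⟩, hφeq⟩ := hφ.exists_continuous_pos_extension hθ.le hφpos
  have hφeq' : ∀ x ∈ Icc 0 θ, f x + M * g x = φ x := fun x hx ↦ (hφeq hx).symm
  have hTφ : ∫ x in 0..θ, (f x + M * g x)⁻¹ = ∫ x in 0..θ, (φ x)⁻¹ :=
    intervalIntegral.integral_congr fun x hx ↦ by rw [hφeq' x (uIcc_of_le hθ.le ▸ hx)]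
  rw [hTφ] at hT ⊢
  have hT0 : 0 ≤ T :=
    (intervalIntegral.integral_nonneg hθ.le fun x _ ↦ (inv_pos.2 (hφpos' x)).le).trans hT
  constructor
  · obtain ⟨u, p, hup, hpT, hcost⟩ :=
      exists_isTrajectory_cost_eq hφc hφpos' hC hφeq' hfθ hM hθ.le hT
    exact ⟨u, p, hup, hpT, hcost.symm⟩
  · rintro _ ⟨u, p, hup, hpT, rfl⟩
    have hint := hup.intervalIntegrable hT0 (hpT ▸ hθ.ne')
    exact hup.cost_ge hT0 hint hpT (hup.mapsTo_Icc hint hpT hl hr hfg) hf hφc hφpos' hφeq'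

theorem one_sub_mul_pos_of_lt_one {s x : ℝ} (hs0 : 0 ≤ s) (hs1 : s ≤ 1) (hx : x < 1) :
    0 < 1 - s * x := by
  rcases le_or_gt x 0 with h | h <;> nlinarith

theorem cubic_div_nonpos {c D θ x : ℝ} (hc : 0 ≤ c) (hD : 0 ≤ D) (hx : x ∈ Icc 0 θ)
    (hθ : θ ≤ 1) : c * (x * (1 - x) * (x - θ)) / D ≤ 0 :=
  div_nonpos_of_nonpos_of_nonneg (mul_nonpos_of_nonneg_of_nonpos hc
    (mul_nonpos_of_nonneg_of_nonpos (mul_nonneg hx.1 (by linarith [hx.2])) (by linarith [hx.2])))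
    hD

theorem cubic_div_nonneg {c D θ x : ℝ} (hc : 0 ≤ c) (hD : 0 ≤ D) (hx : x ∈ Iio 0 ∪ Ioo θ 1)
    (hθ : 0 ≤ θ) : 0 ≤ c * (x * (1 - x) * (x - θ)) / D := by
  refine div_nonneg (mul_nonneg hc ?_) hD
  rcases hx with hx | hx
  · exact mul_nonneg_of_nonpos_of_nonpos
      (mul_nonpos_of_nonpos_of_nonneg (le_of_lt hx) (by linarith [mem_Iio.1 hx]))
      (by linarith [mem_Iio.1 hx])
  · exact mul_nonneg (mul_nonneg (by linarith [hx.1]) (by linarith [hx.2])) (by linarith [hx.1])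

theorem pos_add_mul_of_isGreatest {f g : ℝ → ℝ} {s : Set ℝ} {m M : ℝ}
    (hm : IsGreatest ((fun x ↦ -f x / g x) '' s) m) (hM : m < M) (hg : ∀ x ∈ s, 0 < g x) :
    ∀ x ∈ s, 0 < f x + M * g x := by
  intro x hx
  have := (hm.2 (mem_image_of_mem _ hx)).trans_lt hM
  rw [div_lt_iff₀ (hg x hx)] at this
  linarith

theorem model_theta_mem_Ioo {sh r : ℝ} (hsh0 : 0 < sh) (hlow : 1 - sh < r) (hhigh : r < 1) :
    0 < 1 / sh * (1 - r) ∧ 1 / sh * (1 - r) < 1 := by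
  rw [one_div_mul_eq_div, div_lt_one hsh0]
  exact ⟨div_pos (by linarith) hsh0, by linarith⟩

theorem model_drift_numerator_eq {b1 b2 d1 d2 sh x : ℝ} (hb1 : 0 < b1) (hd2 : 0 < d2)
    (hsh0 : 0 < sh) :
    x * (1 - x) * (d1 * b2 - d2 * b1 * (1 - sh * x)) =
      d2 * b1 * sh * (x * (1 - x) * (x - 1 / sh * (1 - d1 * b2 / (d2 * b1)))) := by
  field_simp
  ring

theorem model_denom_pos {b1 b2 sh x : ℝ} (hb1 : 0 < b1) (hb2 : 0 < b2) (hsh0 : 0 ≤ sh)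
    (hsh1 : sh ≤ 1) (hx : x ∈ Ioo (-(b1 / b2)) 1) :
    0 < b1 * (1 - x) * (1 - sh * x) + b2 * x := by
  have h1 := one_sub_mul_pos_of_lt_one hsh0 hsh1 hx.2
  rcases le_or_gt 0 x with h | h
  · exact add_pos_of_pos_of_nonneg (mul_pos (mul_pos hb1 (sub_pos.2 hx.2)) h1)
      (mul_nonneg hb2.le h)
  · have hbx : -x * b2 < b1 := (lt_div_iff₀ hb2).mp (neg_lt.mp hx.1)
    nlinarith [mul_nonneg (mul_nonneg hb1.le hsh0) (sq_nonneg x),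
      mul_nonneg (mul_nonneg hb1.le hsh0) (neg_nonneg.2 h.le)]

theorem model_gain_pos {b1 b2 K sh x : ℝ} (hb1 : 0 < b1) (hb2 : 0 < b2) (hK : 0 < K)
    (hsh0 : 0 ≤ sh) (hsh1 : sh ≤ 1) (hx : x ∈ Ioo (-(b1 / b2)) 1) :
    0 < 1 / K * (b1 * (1 - x) * (1 - sh * x)) / (b1 * (1 - x) * (1 - sh * x) + b2 * x) :=
  div_pos (mul_pos (one_div_pos.2 hK) (mul_pos (mul_pos hb1 (sub_pos.2 hx.2))
    (one_sub_mul_pos_of_lt_one hsh0 hsh1 hx.2))) (model_denom_pos hb1 hb2 hsh0 hsh1 hx)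

theorem stmt_11_general
    (b1 b2 d1 d2 K sh : ℝ)
    (hb1 : 0 < b1) (hb2 : 0 < b2) (hd2 : 0 < d2)
    (hK : 0 < K) (hsh0 : 0 < sh) (hsh1 : sh ≤ 1)
    (hlow : 1 - sh < d1 * b2 / (d2 * b1)) (hhigh : d1 * b2 / (d2 * b1) < 1)
    (f g : ℝ → ℝ)
    (hf : ∀ p, f p = p * (1 - p) * (d1 * b2 - d2 * b1 * (1 - sh * p)) /
      (b1 * (1 - p) * (1 - sh * p) + b2 * p))
    (hg : ∀ p, g p = (1 / K) * (b1 * (1 - p) * (1 - sh * p)) /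
      (b1 * (1 - p) * (1 - sh * p) + b2 * p))
    (θ : ℝ) (hθ : θ = (1 / sh) * (1 - d1 * b2 / (d2 * b1)))
    (mstar : ℝ)
    (hmstar : IsGreatest ((fun p => -f p / g p) '' Set.Icc 0 θ) mstar)
    (M : ℝ) (hM : mstar < M)
    (Tstar : ℝ) (hTstar : Tstar = ∫ ν in (0:ℝ)..θ, (f ν + M * g ν)⁻¹)
    (T : ℝ) (hT : Tstar ≤ T) :
    (∀ u p : ℝ → ℝ, IsTrajectory f g T M u p → p T = θ →
        M * Tstar ≤ ∫ t in (0:ℝ)..T, u t) ∧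
    IsLeast {c : ℝ | ∃ u p : ℝ → ℝ, IsTrajectory f g T M u p ∧ p T = θ ∧
        c = ∫ t in (0:ℝ)..T, u t} (M * Tstar) := by
  obtain ⟨hθ0, hθ1⟩ : 0 < θ ∧ θ < 1 := hθ ▸ model_theta_mem_Ioo hsh0 hlow hhigh
  have hl : -(b1 / b2) < 0 := neg_lt_zero.2 (div_pos hb1 hb2)
  have hIcc : Icc 0 θ ⊆ Ioo (-(b1 / b2)) 1 := Icc_subset_Ioo hl hθ1
  have hD : ∀ x ∈ Ioo (-(b1 / b2)) 1, 0 < b1 * (1 - x) * (1 - sh * x) + b2 * x :=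
    fun x hx ↦ model_denom_pos hb1 hb2 hsh0.le hsh1 hx
  have hgpos : ∀ x ∈ Ioo (-(b1 / b2)) 1, 0 < g x :=
    fun x hx ↦ hg x ▸ model_gain_pos hb1 hb2 hK hsh0.le hsh1 hx
  have hf' : ∀ x, f x = d2 * b1 * sh * (x * (1 - x) * (x - θ)) /
      (b1 * (1 - x) * (1 - sh * x) + b2 * x) := fun x ↦ by
    rw [hf, model_drift_numerator_eq hb1 hd2 hsh0, ← hθ]
  have hc : 0 ≤ d2 * b1 * sh := by positivity
  have hfg : ∀ x ∈ Ioo (-(b1 / b2)) 0 ∪ Ioo θ 1, 0 ≤ f x ∧ 0 ≤ g x := fun x hx ↦ by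
    have hxI : x ∈ Ioo (-(b1 / b2)) 1 :=
      hx.elim (fun h ↦ ⟨h.1, h.2.trans one_pos⟩) fun h ↦ ⟨hl.trans (hθ0.trans h.1), h.2⟩
    exact ⟨hf' x ▸ cubic_div_nonneg hc (hD x hxI).le (hx.imp (·.2) id) hθ0.le, (hgpos x hxI).le⟩
  have hφ : ContinuousOn (fun x ↦ f x + M * g x) (Icc 0 θ) := by
    simp only [hf, hg]
    fun_prop (disch := exact fun x hx ↦ (hD x (hIcc hx)).ne')
  have hm0 : 0 ≤ mstar := by
    simpa [hf] using hmstar.2 (mem_image_of_mem _ (left_mem_Icc.2 hθ0.le))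
  have hleast := isLeast_cost hθ0 (hm0.trans hM.le) hl hθ1 hfg
    (fun x hx ↦ hf' x ▸ cubic_div_nonpos hc (hD x (hIcc hx)).le hx hθ1.le) (by simp [hf']) hφ
    (pos_add_mul_of_isGreatest hmstar hM fun x hx ↦ hgpos x (hIcc hx)) (hTstar ▸ hT)
  rw [← hTstar] at hleast
  exact ⟨fun u p hup hpT ↦ hleast.2 ⟨u, p, hup, hpT, rfl⟩, hleast⟩

/-- optimality part of Theorem 1: for M > m* and T ≥ T*, every admissible
control steering the state to θ at time T has cost ∫₀^T u ≥ M·T*, and the minimal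
cost over such controls equals M·T*. -/
theorem stmt_11
    (b1 b2 d1 d2 K sh : ℝ)
    (hb1 : 0 < b1) (hb2 : 0 < b2) (hd1 : 0 < d1) (hd2 : 0 < d2)
    (hK : 0 < K) (hsh0 : 0 < sh) (hsh1 : sh ≤ 1)
    (hlow : 1 - sh < d1 * b2 / (d2 * b1)) (hhigh : d1 * b2 / (d2 * b1) < 1)
    (f g : ℝ → ℝ)
    (hf : ∀ p, f p = p * (1 - p) * (d1 * b2 - d2 * b1 * (1 - sh * p)) /
      (b1 * (1 - p) * (1 - sh * p) + b2 * p))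
    (hg : ∀ p, g p = (1 / K) * (b1 * (1 - p) * (1 - sh * p)) /
      (b1 * (1 - p) * (1 - sh * p) + b2 * p))
    (θ : ℝ) (hθ : θ = (1 / sh) * (1 - d1 * b2 / (d2 * b1)))
    (mstar : ℝ)
    (hmstar : IsGreatest ((fun p => -f p / g p) '' Set.Icc 0 θ) mstar)
    (M : ℝ) (hM : mstar < M)
    (Tstar : ℝ) (hTstar : Tstar = ∫ ν in (0:ℝ)..θ, (f ν + M * g ν)⁻¹)
    (T : ℝ) (hT : Tstar ≤ T) :
    (∀ u p : ℝ → ℝ, IsTrajectory f g T M u p → p T = θ →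
        M * Tstar ≤ ∫ t in (0:ℝ)..T, u t) ∧
    IsLeast {c : ℝ | ∃ u p : ℝ → ℝ, IsTrajectory f g T M u p ∧ p T = θ ∧
        c = ∫ t in (0:ℝ)..T, u t} (M * Tstar) :=
  stmt_11_general b1 b2 d1 d2 K sh hb1 hb2 hd2 hK hsh0 hsh1 hlow hhigh f g hf hg θ hθ mstar hmstar M
    hM Tstar hTstar T hT
end

section
/- (Minimal time, case α = 1 of Theorem 2.) Assume M > m*. For every T > 0 and every measurable control u : [0,T] → [0,M] whose associated state satisfies p_u(T) = θ, one has T ≥ T*; moreover the constant control u ≡ M on [0,T*] achieves p_u(T*) = θ, so T* is the minimal time over all admissible pairs (T, u). -/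
/-!
Write `h = f + M g`; the hypothesis `M > m*` says exactly that `h > 0` on `[0, θ]`. Along an
admissible trajectory `p' = f(p) + u g(p) ≤ h(p)` wherever `g(p) ≥ 0`, so while `p` crosses
`[0, θ]` the clock `Φ(y) = ∫₀^y dν / h ν` read along `p` advances at most at unit speed. Since `p`
is only an indefinite integral, this is a statement about right slopes of `Φ ∘ p`, turned into
`Φ θ ≤ T` by a fencing argument. For `u ≡ M` the bound is attained: `Φ⁻¹` is the trajectory
(separation of variables, after extending `h` continuously off `[0, θ]`).
-/

open Set Filter Topology MeasureTheory

namespace ContinuousOn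

variable {p : ℝ → ℝ} {a b y : ℝ}

theorem exists_first_eq (hab : a ≤ b) (hp : ContinuousOn p (Icc a b)) (ha : p a ≤ y)
    (hb : y ≤ p b) : ∃ t ∈ Icc a b, p t = y ∧ ∀ s ∈ Icc a t, p s ≤ y := by
  set S := Icc a b ∩ p ⁻¹' {y}
  have hS : IsClosed S := hp.preimage_isClosed_of_isClosed isClosed_Icc isClosed_singleton
  have hSne : S.Nonempty := intermediate_value_Icc hab hp ⟨ha, hb⟩
  have hSbdd : BddBelow S := ⟨a, fun t ht => ht.1.1⟩
  obtain ⟨⟨hta, htb⟩, hpt⟩ := hS.csInf_mem hSne hSbdd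
  refine ⟨sInf S, ⟨hta, htb⟩, hpt, fun s hs => not_lt.1 fun hys => ?_⟩
  obtain ⟨s', hs', hps'⟩ := intermediate_value_Icc hs.1 (hp.mono (Icc_subset_Icc_right
    (hs.2.trans htb))) ⟨ha, hys.le⟩
  have : sInf S ≤ s' := csInf_le hSbdd ⟨⟨hs'.1, hs'.2.trans (hs.2.trans htb)⟩, hps'⟩
  have hst : s = sInf S := le_antisymm hs.2 (this.trans hs'.2)
  exact hys.ne' (hst ▸ hpt)

theorem exists_last_eq (hab : a ≤ b) (hp : ContinuousOn p (Icc a b)) (ha : p a ≤ y)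
    (hb : y ≤ p b) : ∃ t ∈ Icc a b, p t = y ∧ ∀ s ∈ Icc t b, y ≤ p s := by
  set S := Icc a b ∩ p ⁻¹' {y}
  have hS : IsClosed S := hp.preimage_isClosed_of_isClosed isClosed_Icc isClosed_singleton
  have hSne : S.Nonempty := intermediate_value_Icc hab hp ⟨ha, hb⟩
  have hSbdd : BddAbove S := ⟨b, fun t ht => ht.1.2⟩
  obtain ⟨⟨hta, htb⟩, hpt⟩ := hS.csSup_mem hSne hSbdd
  refine ⟨sSup S, ⟨hta, htb⟩, hpt, fun s hs => not_lt.1 fun hys => ?_⟩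
  obtain ⟨s', hs', hps'⟩ := intermediate_value_Icc hs.2 (hp.mono (Icc_subset_Icc_left
    (hta.trans hs.1))) ⟨hys.le, hb⟩
  have : s' ≤ sSup S := le_csSup hSbdd ⟨⟨(hta.trans hs.1).trans hs'.1, hs'.2⟩, hps'⟩
  have hst : s = sSup S := le_antisymm (hs'.1.trans this) hs.1
  exact hys.ne (hst ▸ hpt)

theorem exists_crossing {y₁ y₂ : ℝ} (hab : a ≤ b) (hp : ContinuousOn p (Icc a b))
    (ha : p a ≤ y₁) (hy : y₁ ≤ y₂) (hb : y₂ ≤ p b) :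
    ∃ t₀ t₁, a ≤ t₀ ∧ t₀ ≤ t₁ ∧ t₁ ≤ b ∧ p t₀ = y₁ ∧ p t₁ = y₂ ∧
      MapsTo p (Icc t₀ t₁) (Icc y₁ y₂) := by
  obtain ⟨t₁, ⟨hat₁, ht₁b⟩, hpt₁, hbelow⟩ := hp.exists_first_eq hab (ha.trans hy) hb
  obtain ⟨t₀, ⟨hat₀, ht₀t₁⟩, hpt₀, habove⟩ := (hp.mono (Icc_subset_Icc_right ht₁b)).exists_last_eq
    hat₁ ha (hpt₁.symm ▸ hy)
  exact ⟨t₀, t₁, hat₀, ht₀t₁, ht₁b, hpt₀, hpt₁, fun s hs =>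
    ⟨habove s hs, hbelow s ⟨hat₀.trans hs.1, hs.2⟩⟩⟩

end ContinuousOn

theorem slope_comp_eq_mul (Φ p : ℝ → ℝ) (x z : ℝ) :
    slope (Φ ∘ p) x z = slope Φ (p x) (p z) * slope p x z := by
  by_cases hpz : p z = p x
  · simp [slope_def_field, hpz]
  · rw [slope_def_field, slope_def_field, slope_def_field, Function.comp_apply,
      Function.comp_apply, div_mul_div_cancel₀ (sub_ne_zero.2 hpz)]

theorem HasDerivAt.eventually_slope_lt {Φ : ℝ → ℝ} {φ a y : ℝ} (hΦ : HasDerivAt Φ φ y)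
    (hφa : φ < a) (ha : 0 < a) : ∀ᶠ y' in 𝓝 y, slope Φ y y' < a := by
  have := (hasDerivAt_iff_tendsto_slope.1 hΦ).eventually_lt_const hφa
  filter_upwards [eventually_nhdsWithin_iff.1 this] with y' hy'
  rcases eq_or_ne y' y with rfl | hne
  · rwa [slope_same]
  · exact hy' hne

theorem Monotone.eventually_slope_comp_lt {Φ p : ℝ → ℝ} {φ b r x : ℝ} (hΦ : Monotone Φ)
    (hΦ' : HasDerivAt Φ φ (p x)) (hp : Tendsto p (𝓝[>] x) (𝓝 (p x)))
    (hpb : ∀ᶠ z in 𝓝[>] x, slope p x z < b) (hb : 0 < b) (hr : φ * b < r) (hr0 : 0 < r) :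
    ∀ᶠ z in 𝓝[>] x, slope (Φ ∘ p) x z < r := by
  have hΦa : ∀ᶠ z in 𝓝[>] x, slope Φ (p x) (p z) < r / b :=
    hp.eventually (hΦ'.eventually_slope_lt ((lt_div_iff₀ hb).2 hr) (div_pos hr0 hb))
  filter_upwards [hpb, hΦa] with z hzb hza
  have hΦ0 : 0 ≤ slope Φ (p x) (p z) := (hΦ.monotoneOn univ).slope_nonneg trivial trivial
  rw [slope_comp_eq_mul]
  rcases le_or_gt (slope p x z) 0 with hneg | hpos
  · linarith [mul_nonpos_of_nonneg_of_nonpos hΦ0 hneg]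
  · calc _ < r / b * b := mul_lt_mul'' hza hzb hΦ0 hpos.le
      _ = r := div_mul_cancel₀ r hb.ne'

theorem eventually_slope_lt_of_integral_le {p F k : ℝ → ℝ} {t₀ t₁ x b : ℝ}
    (hF : IntervalIntegrable F volume t₀ t₁)
    (hpF : ∀ s ∈ Icc t₀ t₁, ∀ t ∈ Icc t₀ t₁, p t - p s = ∫ r in s..t, F r)
    (hFk : ∀ s ∈ Icc t₀ t₁, F s ≤ k s) (hx : x ∈ Ico t₀ t₁)
    (hk : ContinuousWithinAt k (Icc t₀ t₁) x) (hb : k x < b) :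
    ∀ᶠ z in 𝓝[>] x, slope p x z < b := by
  obtain ⟨b', hkb', hb'b⟩ := exists_between hb
  have hnear : ∀ᶠ s in 𝓝[≥] x, s ∈ Icc t₀ t₁ ∧ k s < b' :=
    Filter.Eventually.and (Icc_mem_nhdsGE_of_mem hx)
      ((hk.mono_of_mem_nhdsWithin (Icc_mem_nhdsGE_of_mem hx)).eventually_lt_const hkb')
  obtain ⟨u, hxu, hsub⟩ := mem_nhdsGE_iff_exists_Ico_subset.1 hnear
  filter_upwards [Ioo_mem_nhdsGT hxu] with z hz
  have hxz : Icc x z ⊆ Icc t₀ t₁ := fun s hs => (hsub ⟨hs.1, hs.2.trans_lt hz.2⟩).1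
  have hint : ∫ r in x..z, F r ≤ ∫ _ in x..z, b' :=
    intervalIntegral.integral_mono_on hz.1.le
      (hF.mono_set (by rwa [uIcc_of_le hz.1.le, uIcc_of_le (hx.1.trans hx.2.le)]))
      intervalIntegrable_const fun s hs =>
        (hFk s (hxz hs)).trans (hsub ⟨hs.1, hs.2.trans_lt hz.2⟩).2.le
  rw [intervalIntegral.integral_const, smul_eq_mul, ← hpF x (hxz ⟨le_rfl, hz.1.le⟩) z
    (hxz ⟨hz.1.le, le_rfl⟩)] at hint
  rw [slope_def_field, div_lt_iff₀ (sub_pos.2 hz.1)]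
  nlinarith [sub_pos.2 hz.1]

theorem ContinuousOn.exists_continuous_extension_Icc {h : ℝ → ℝ} {α β : ℝ} (hαβ : α ≤ β)
    (hh : ContinuousOn h (Icc α β)) :
    ∃ G : ℝ → ℝ, Continuous G ∧ EqOn G h (Icc α β) ∧ range G = h '' Icc α β :=
  ⟨IccExtend hαβ ((Icc α β).domRestrict h), continuous_IccExtend_iff.2 hh.domRestrict,
    fun _ hx => IccExtend_of_mem hαβ _ hx, by rw [IccExtend_range, range_domRestrict]⟩

theorem integral_inv_le_of_integral_le {h p F : ℝ → ℝ} {α β t₀ t₁ : ℝ} (hαβ : α ≤ β)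
    (ht : t₀ ≤ t₁) (hh : ContinuousOn h (Icc α β)) (hpos : ∀ y ∈ Icc α β, 0 < h y)
    (hp : ContinuousOn p (Icc t₀ t₁)) (hmaps : MapsTo p (Icc t₀ t₁) (Icc α β))
    (hF : IntervalIntegrable F volume t₀ t₁)
    (hpF : ∀ s ∈ Icc t₀ t₁, ∀ t ∈ Icc t₀ t₁, p t - p s = ∫ r in s..t, F r)
    (hFh : ∀ s ∈ Icc t₀ t₁, F s ≤ h (p s)) :
    ∫ y in p t₀..p t₁, (h y)⁻¹ ≤ t₁ - t₀ := by
  obtain ⟨G, hG, hGh, hGrange⟩ := hh.exists_continuous_extension_Icc hαβ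
  have hGpos : ∀ y, 0 < G y := fun y => by
    obtain ⟨x, hx, hxy⟩ := hGrange ▸ mem_range_self y
    exact hxy ▸ hpos x hx
  have hGinv : Continuous fun y => (G y)⁻¹ := hG.inv₀ fun y => (hGpos y).ne'
  set Φ : ℝ → ℝ := fun y => ∫ ν in 0..y, (G ν)⁻¹
  have hΦ' : ∀ y, HasDerivAt Φ (G y)⁻¹ y := fun y =>
    (hGinv.integral_hasStrictDerivAt 0 y).hasDerivAt
  have hΦmono : Monotone Φ :=
    (strictMono_of_hasDerivAt_pos hΦ' fun y => inv_pos.2 (hGpos y)).monotone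
  have hΦc : Continuous Φ := continuous_iff_continuousAt.2 fun y => (hΦ' y).continuousAt
  have hslope : ∀ x ∈ Ico t₀ t₁, ∀ r, 1 < r → ∀ᶠ z in 𝓝[>] x, slope (Φ ∘ p) x z < r := by
    intro x hx r hr
    have hx' : x ∈ Icc t₀ t₁ := Ico_subset_Icc_self hx
    have h0 : 0 < h (p x) := hpos _ (hmaps hx')
    obtain ⟨b, hb, hbr⟩ := exists_between (lt_mul_of_one_lt_left h0 hr)
    refine hΦmono.eventually_slope_comp_lt (hΦ' (p x))
      ((hp x hx').tendsto.mono_left (nhdsWithin_le_of_mem (Icc_mem_nhdsGT_of_mem hx)))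
      (eventually_slope_lt_of_integral_le hF hpF hFh hx ((hh.comp hp hmaps) x hx') hb)
      (h0.trans hb) ?_ (by linarith)
    rw [hGh (hmaps hx'), inv_mul_lt_iff₀ h0]
    linarith
  have hfence := image_le_of_liminf_slope_right_le_deriv_boundary (hΦc.comp_continuousOn hp)
    (B := fun t => Φ (p t₀) + (t - t₀)) (by simp) (by fun_prop)
    (fun x _ => ((hasDerivAt_id x).sub_const t₀).const_add _ |>.hasDerivWithinAt)
    fun x hx r hr => (hslope x hx r (by simpa using hr)).frequently
  have hint : ∫ y in p t₀..p t₁, (h y)⁻¹ = Φ (p t₁) - Φ (p t₀) := by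
    rw [intervalIntegral.integral_interval_sub_left (hGinv.intervalIntegrable _ _)
      (hGinv.intervalIntegrable _ _)]
    refine intervalIntegral.integral_congr fun y hy => ?_
    rw [hGh (uIcc_subset_Icc (hmaps ⟨le_rfl, ht⟩) (hmaps ⟨ht, le_rfl⟩) hy)]
  have := hfence ⟨ht, le_rfl⟩
  simp only [Function.comp_apply] at this
  linarith

theorem exists_hasDerivAt_comp_of_pos {G : ℝ → ℝ} (hG : Continuous G) (hpos : ∀ y, 0 < G y)
    (hbdd : BddAbove (range G)) :
    ∃ q : ℝ → ℝ, (∀ t, HasDerivAt q (G (q t)) t) ∧ ∀ y, q (∫ ν in 0..y, (G ν)⁻¹) = y := by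
  set Φ : ℝ → ℝ := fun y => ∫ ν in 0..y, (G ν)⁻¹
  obtain ⟨C, hC⟩ := hbdd
  have hC' : ∀ y, G y ≤ C := fun y => hC ⟨y, rfl⟩
  have hCpos : 0 < C := (hpos 0).trans_le (hC' 0)
  have hΦ' : ∀ y, HasDerivAt Φ (G y)⁻¹ y := fun y =>
    ((hG.inv₀ fun y => (hpos y).ne').integral_hasStrictDerivAt 0 y).hasDerivAt
  have hΦc : Continuous Φ := continuous_iff_continuousAt.2 fun y => (hΦ' y).continuousAt
  have hΦ0 : Φ 0 = 0 := intervalIntegral.integral_same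
  have hslow : Monotone fun y => Φ y - y / C :=
    monotone_of_hasDerivAt_nonneg (fun y => (hΦ' y).sub ((hasDerivAt_id y).div_const C))
      fun y => sub_nonneg.2 (one_div C ▸ inv_anti₀ (hpos y) (hC' y))
  have hsurj : Function.Surjective Φ := by
    refine hΦc.surjective (tendsto_atTop_mono' _ ?_ (tendsto_id.atTop_div_const hCpos))
      (tendsto_atBot_mono' _ ?_ (tendsto_id.atBot_div_const hCpos))
    · filter_upwards [eventually_ge_atTop 0] with y hy
      simpa [hΦ0] using hslow hy
    · filter_upwards [eventually_le_atBot 0] with y hy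
      simpa [hΦ0] using hslow hy
  set e := (strictMono_of_hasDerivAt_pos hΦ' fun y => inv_pos.2 (hpos y)).orderIsoOfSurjective Φ
    hsurj
  refine ⟨e.symm, fun t => ?_, e.symm_apply_apply⟩
  simpa using HasDerivAt.of_local_left_inverse e.symm.continuous.continuousAt (hΦ' (e.symm t))
    (inv_pos.2 (hpos _)).ne' (Eventually.of_forall e.apply_symm_apply)

theorem ContinuousOn.exists_integral_solution_of_pos {h : ℝ → ℝ} {θ : ℝ} (hθ : 0 ≤ θ)
    (hh : ContinuousOn h (Icc 0 θ)) (hpos : ∀ y ∈ Icc 0 θ, 0 < h y) :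
    ∃ q : ℝ → ℝ, Continuous q ∧ q 0 = 0 ∧ q (∫ y in 0..θ, (h y)⁻¹) = θ ∧
      ∀ t ∈ Icc 0 (∫ y in 0..θ, (h y)⁻¹), q t = ∫ s in 0..t, h (q s) := by
  obtain ⟨G, hG, hGh, hGrange⟩ := hh.exists_continuous_extension_Icc hθ
  have hGpos : ∀ y, 0 < G y := fun y => by
    obtain ⟨x, hx, hxy⟩ := hGrange ▸ mem_range_self y
    exact hxy ▸ hpos x hx
  obtain ⟨q, hq', hqΦ⟩ := exists_hasDerivAt_comp_of_pos hG hGpos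
    (hGrange ▸ isCompact_Icc.bddAbove_image hh)
  have hT : ∫ y in 0..θ, (G y)⁻¹ = ∫ y in 0..θ, (h y)⁻¹ :=
    intervalIntegral.integral_congr fun y hy => by
      rw [hGh (by rwa [uIcc_of_le hθ] at hy)]
  have hqc : Continuous q := continuous_iff_continuousAt.2 fun t => (hq' t).continuousAt
  have hq0 : q 0 = 0 := by simpa using hqΦ 0
  have hqT : q (∫ y in 0..θ, (h y)⁻¹) = θ := hT ▸ hqΦ θ
  have hqmono : Monotone q := (strictMono_of_hasDerivAt_pos hq' fun t => hGpos _).monotone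
  refine ⟨q, hqc, hq0, hqT, fun t ht => ?_⟩
  rw [intervalIntegral.integral_congr (g := fun s => G (q s)) fun s hs => ?_,
    intervalIntegral.integral_eq_sub_of_hasDerivAt (fun s _ => hq' s)
      ((hG.comp hqc).intervalIntegrable _ _), hq0, sub_zero]
  rw [uIcc_of_le ht.1] at hs
  refine (hGh ⟨?_, ?_⟩).symm
  · simpa [hq0] using hqmono hs.1
  · simpa [hqT] using hqmono (hs.2.trans ht.2)

theorem IsTrajectory.integral_inv_le {f g u p : ℝ → ℝ} {T M θ : ℝ}
    (htraj : IsTrajectory f g T M u p) (hT : 0 ≤ T) (hθ : 0 < θ) (hpT : p T = θ)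
    (hh : ContinuousOn (fun y => f y + M * g y) (Icc 0 θ))
    (hpos : ∀ y ∈ Icc 0 θ, 0 < f y + M * g y) (hg : ∀ y ∈ Icc 0 θ, 0 ≤ g y) :
    ∫ y in 0..θ, (f y + M * g y)⁻¹ ≤ T := by
  obtain ⟨-, hu, hp, hp0, hpF⟩ := htraj
  set F : ℝ → ℝ := fun s => f (p s) + u s * g (p s)
  by_cases hF : IntervalIntegrable F volume 0 T
  swap
  · have := hpF T ⟨hT, le_rfl⟩
    rw [intervalIntegral.integral_undef hF, hpT] at this
    exact absurd this hθ.ne'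
  have hsub : ∀ {t}, t ∈ Icc 0 T → uIcc 0 t ⊆ uIcc 0 T := fun ht =>
    uIcc_subset_uIcc_left (by rwa [uIcc_of_le hT])
  have hdiff : ∀ s ∈ Icc 0 T, ∀ t ∈ Icc 0 T, p t - p s = ∫ r in s..t, F r := fun s hs t ht => by
    rw [hpF t ht, hpF s hs, intervalIntegral.integral_interval_sub_left (hF.mono_set (hsub ht))
      (hF.mono_set (hsub hs))]
  obtain ⟨t₀, t₁, ht₀, ht₀₁, ht₁, hpt₀, hpt₁, hmaps⟩ :=
    hp.exists_crossing hT hp0.le hθ.le hpT.ge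
  have hIcc : Icc t₀ t₁ ⊆ Icc 0 T := Icc_subset_Icc ht₀ ht₁
  have hbound := integral_inv_le_of_integral_le hθ.le ht₀₁ hh hpos (hp.mono hIcc) hmaps
    (hF.mono_set (by rw [uIcc_of_le ht₀₁, uIcc_of_le hT]; exact hIcc))
    (fun s hs t ht => hdiff s (hIcc hs) t (hIcc ht))
    fun s hs => add_le_add le_rfl (mul_le_mul_of_nonneg_right (hu s).2 (hg _ (hmaps hs)))
  rw [hpt₀, hpt₁] at hbound
  linarith

theorem exists_isTrajectory_const {f g : ℝ → ℝ} {M θ : ℝ} (hM : 0 ≤ M) (hθ : 0 ≤ θ)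
    (hh : ContinuousOn (fun y => f y + M * g y) (Icc 0 θ))
    (hpos : ∀ y ∈ Icc 0 θ, 0 < f y + M * g y) :
    ∃ p, IsTrajectory f g (∫ y in 0..θ, (f y + M * g y)⁻¹) M (fun _ => M) p ∧
      p (∫ y in 0..θ, (f y + M * g y)⁻¹) = θ := by
  obtain ⟨q, hqc, hq0, hqT, hqF⟩ := hh.exists_integral_solution_of_pos hθ hpos
  exact ⟨q, ⟨measurable_const, fun _ => ⟨hM, le_rfl⟩, hqc.continuousOn, hq0, hqF⟩, hqT⟩

theorem stmt_14_general
    (b1 b2 d1 d2 K sh : ℝ)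
    (hb1 : 0 < b1) (hb2 : 0 < b2)
    (hK : 0 < K) (hsh0 : 0 < sh) (hsh1 : sh ≤ 1)
    (hlow : 1 - sh < d1 * b2 / (d2 * b1)) (hhigh : d1 * b2 / (d2 * b1) < 1)
    (f g : ℝ → ℝ)
    (hf : ∀ p, f p = p * (1 - p) * (d1 * b2 - d2 * b1 * (1 - sh * p)) /
      (b1 * (1 - p) * (1 - sh * p) + b2 * p))
    (hg : ∀ p, g p = (1 / K) * (b1 * (1 - p) * (1 - sh * p)) /
      (b1 * (1 - p) * (1 - sh * p) + b2 * p))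
    (θ : ℝ) (hθ : θ = (1 / sh) * (1 - d1 * b2 / (d2 * b1)))
    (mstar : ℝ)
    (hmstar : IsGreatest ((fun p => -f p / g p) '' Set.Icc 0 θ) mstar)
    (M : ℝ) (hM : mstar < M)
    (Tstar : ℝ) (hTstar : Tstar = ∫ ν in (0:ℝ)..θ, (f ν + M * g ν)⁻¹) :
    (∀ T : ℝ, 0 < T → ∀ u p : ℝ → ℝ, IsTrajectory f g T M u p → p T = θ → Tstar ≤ T) ∧
    (∃ p : ℝ → ℝ, IsTrajectory f g Tstar M (fun _ => M) p ∧ p Tstar = θ) := by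
  have hθ0 : 0 < θ := by rw [hθ]; have := sub_pos.2 hhigh; positivity
  have hθ1 : θ < 1 := by
    rw [hθ, one_div_mul_eq_div, div_lt_one hsh0]; linarith
  have hfactors : ∀ y ∈ Icc 0 θ, 0 < b1 * (1 - y) * (1 - sh * y) := fun y hy =>
    mul_pos (mul_pos hb1 (by linarith [hy.2])) (by nlinarith [hy.1, hy.2])
  have hden : ∀ y ∈ Icc 0 θ, 0 < b1 * (1 - y) * (1 - sh * y) + b2 * y := fun y hy =>
    add_pos_of_pos_of_nonneg (hfactors y hy) (mul_nonneg hb2.le hy.1)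
  have hgpos : ∀ y ∈ Icc 0 θ, 0 < g y := fun y hy => by
    rw [hg]
    exact div_pos (mul_pos (one_div_pos.2 hK) (hfactors y hy)) (hden y hy)
  have hcont : ContinuousOn (fun y => f y + M * g y) (Icc 0 θ) := by
    simp only [hf, hg]
    fun_prop (disch := exact fun y hy => (hden y hy).ne')
  have hpos : ∀ y ∈ Icc 0 θ, 0 < f y + M * g y := fun y hy => by
    have := (div_lt_iff₀ (hgpos y hy)).1 ((hmstar.2 ⟨y, hy, rfl⟩).trans_lt hM)
    linarith
  have hM0 : 0 ≤ M := by
    have := hmstar.2 ⟨0, ⟨le_rfl, hθ0.le⟩, rfl⟩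
    simp only [hf 0, zero_mul, zero_div, neg_zero] at this
    linarith
  subst hTstar
  exact ⟨fun T hT u p htraj hpT => htraj.integral_inv_le hT.le hθ0 hpT hcont hpos
    fun y hy => (hgpos y hy).le, exists_isTrajectory_const hM0 hθ0.le hcont hpos⟩

/-- minimal time, case α = 1 of Theorem 2: for M > m*, every admissible
pair (T,u) with p_u(T) = θ satisfies T ≥ T*, and the constant control u ≡ M on [0,T*]
realizes p(T*) = θ; hence T* is the minimal time. -/
theorem stmt_14
    (b1 b2 d1 d2 K sh : ℝ)
    (hb1 : 0 < b1) (hb2 : 0 < b2) (hd1 : 0 < d1) (hd2 : 0 < d2)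
    (hK : 0 < K) (hsh0 : 0 < sh) (hsh1 : sh ≤ 1)
    (hlow : 1 - sh < d1 * b2 / (d2 * b1)) (hhigh : d1 * b2 / (d2 * b1) < 1)
    (f g : ℝ → ℝ)
    (hf : ∀ p, f p = p * (1 - p) * (d1 * b2 - d2 * b1 * (1 - sh * p)) /
      (b1 * (1 - p) * (1 - sh * p) + b2 * p))
    (hg : ∀ p, g p = (1 / K) * (b1 * (1 - p) * (1 - sh * p)) /
      (b1 * (1 - p) * (1 - sh * p) + b2 * p))
    (θ : ℝ) (hθ : θ = (1 / sh) * (1 - d1 * b2 / (d2 * b1)))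
    (mstar : ℝ)
    (hmstar : IsGreatest ((fun p => -f p / g p) '' Set.Icc 0 θ) mstar)
    (M : ℝ) (hM : mstar < M)
    (Tstar : ℝ) (hTstar : Tstar = ∫ ν in (0:ℝ)..θ, (f ν + M * g ν)⁻¹) :
    (∀ T : ℝ, 0 < T → ∀ u p : ℝ → ℝ, IsTrajectory f g T M u p → p T = θ → Tstar ≤ T) ∧
    (∃ p : ℝ → ℝ, IsTrajectory f g Tstar M (fun _ => M) p ∧ p Tstar = θ) :=
  stmt_14_general b1 b2 d1 d2 K sh hb1 hb2 hK hsh0 hsh1 hlow hhigh f g hf hg θ hθ mstar hmstar M hM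
    Tstar hTstar
end
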